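/- arXiv:0906.3838 — 13 statements merged into one kernel-verified Lean document; each statement's English description precedes it below -/
import Mathlib

section
/- Let d be a nonnegative integer and fix integers s,t with 0 ≤ s,t ≤ d. Call a pair (i,j) with 0 ≤ i,j ≤ d 'zigzag' (relative to s,t) if: i is not between s,j; j is not between i,t; and at least one of i,j is not between s,t; where r is 'between' the ordered pair a,b means a ≥ r > b or a ≤ r < b. Then the number of zigzag pairs (i,j) is exactly d + 1 + s(d-s) + t(d-t). -/
/-!
Reflecting every coordinate `x ↦ d - x` preserves betweenness, hence maps the zigzag pairs for
`(s, t)` bijectively onto those for `(d - s, d - t)`; the count is invariant under this, so we may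
assume `s ≤ t`. Then the zigzag pairs are the disjoint union of four rectangles
`[0, s) × [t, d]`, `(s, t] × [0, s)`, `{t} × [s, t]` and `(t, d] × [0, t]`.
-/

open scoped Classical

/-- `r` is between the ordered pair `a,b`: `a ≥ r > b` or `a ≤ r < b`. -/
def Between (a r b : ℤ) : Prop := (a ≥ r ∧ r > b) ∨ (a ≤ r ∧ r < b)

/-- `(i,j)` is zigzag relative to `(s,t)`. -/
def Zigzag (s t i j : ℤ) : Prop :=
  ¬ Between s i j ∧ ¬ Between i j t ∧ (¬ Between s i t ∨ ¬ Between s j t)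

theorem between_sub_left_iff (d a r b : ℤ) : Between (d - a) (d - r) (d - b) ↔ Between a r b := by
  unfold Between
  omega

theorem zigzag_sub_left_iff (d s t i j : ℤ) :
    Zigzag (d - s) (d - t) (d - i) (d - j) ↔ Zigzag s t i j := by
  simp only [Zigzag, between_sub_left_iff]

noncomputable def zigzagPairs (d s t : ℤ) : Finset (ℤ × ℤ) :=
  (Finset.Icc 0 d ×ˢ Finset.Icc 0 d).filter fun p => Zigzag s t p.1 p.2

theorem mem_zigzagPairs_sub_left_iff {d s t i j : ℤ} :
    (d - i, d - j) ∈ zigzagPairs d (d - s) (d - t) ↔ (i, j) ∈ zigzagPairs d s t := by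
  simp only [zigzagPairs, Finset.mem_filter, Finset.mem_product, Finset.mem_Icc,
    zigzag_sub_left_iff]
  exact and_congr (by omega) Iff.rfl

theorem card_zigzagPairs_sub_left (d s t : ℤ) :
    (zigzagPairs d (d - s) (d - t)).card = (zigzagPairs d s t).card := by
  refine Finset.card_nbij' (fun p => (d - p.1, d - p.2)) (fun p => (d - p.1, d - p.2))
    (fun p hp => ?_) (fun p hp => ?_) (fun p _ => by simp) (fun p _ => by simp)
  · rw [Finset.mem_coe, ← mem_zigzagPairs_sub_left_iff, sub_sub_cancel, sub_sub_cancel]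
    exact hp
  · exact mem_zigzagPairs_sub_left_iff.2 hp

theorem zigzagPairs_eq_of_le {d s t : ℤ} (hs : 0 ≤ s) (hst : s ≤ t) (htd : t ≤ d) :
    zigzagPairs d s t =
      Finset.Icc 0 (s - 1) ×ˢ Finset.Icc t d ∪ Finset.Icc (s + 1) t ×ˢ Finset.Icc 0 (s - 1) ∪
        {t} ×ˢ Finset.Icc s t ∪ Finset.Icc (t + 1) d ×ˢ Finset.Icc 0 t := by
  ext ⟨i, j⟩
  rw [zigzagPairs, Finset.mem_filter]
  simp only [Zigzag, Between, Finset.mem_union, Finset.mem_product, Finset.mem_Icc,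
    Finset.mem_singleton]
  omega

theorem card_zigzagPairs_of_le {d s t : ℤ} (hs : 0 ≤ s) (hst : s ≤ t) (htd : t ≤ d) :
    ((zigzagPairs d s t).card : ℤ) = d + 1 + s * (d - s) + t * (d - t) := by
  rw [zigzagPairs_eq_of_le hs hst htd, Finset.card_union_of_disjoint,
    Finset.card_union_of_disjoint, Finset.card_union_of_disjoint]
  · simp (disch := omega) only [Finset.card_product, Finset.card_singleton, Nat.cast_add,
      Nat.cast_mul, Nat.cast_one, Int.card_Icc_of_le]
    ring
  all_goals
    rw [Finset.disjoint_left]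
    rintro ⟨i, j⟩
    simp only [Finset.mem_union, Finset.mem_product, Finset.mem_Icc, Finset.mem_singleton]
    omega

theorem stmt_0_general (d s t : ℤ) (hs0 : 0 ≤ s) (hsd : s ≤ d)
    (ht0 : 0 ≤ t) (htd : t ≤ d) :
    ((((Finset.Icc (0:ℤ) d) ×ˢ (Finset.Icc (0:ℤ) d)).filter
        (fun p : ℤ × ℤ => Zigzag s t p.1 p.2)).card : ℤ)
      = d + 1 + s * (d - s) + t * (d - t) := by
  change ((zigzagPairs d s t).card : ℤ) = _
  rcases le_total s t with hst | hts
  · exact card_zigzagPairs_of_le hs0 hst htd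
  · rw [← card_zigzagPairs_sub_left,
      card_zigzagPairs_of_le (sub_nonneg.2 hsd) (sub_le_sub_left hts d) (sub_le_self d ht0)]
    ring

theorem stmt_0 (d s t : ℤ) (hd : 0 ≤ d) (hs0 : 0 ≤ s) (hsd : s ≤ d)
    (ht0 : 0 ≤ t) (htd : t ≤ d) :
    ((((Finset.Icc (0:ℤ) d) ×ˢ (Finset.Icc (0:ℤ) d)).filter
        (fun p : ℤ × ℤ => Zigzag s t p.1 p.2)).card : ℤ)
      = d + 1 + s * (d - s) + t * (d - t) :=
  stmt_0_general d s t hs0 hsd ht0 htd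
end

section
/- Let d be a nonnegative integer and fix 0 ≤ s,t ≤ d. Define, for 0 ≤ i,j ≤ d, the pair (i,j) to be 'positive' if one of the following holds: (case s < t) 0 ≤ i < s and i ≤ j < t; or s ≤ i < t and s ≤ j < s+t-i; or t < j ≤ i ≤ d; (case s = t) 0 ≤ i ≤ j < s; or s < j ≤ i ≤ d; (case s > t) 0 ≤ i ≤ j < t; or t < i ≤ s and s+t-i < j ≤ s; or s < i ≤ d and t < j ≤ i. Then for each fixed i with 0 ≤ i ≤ d, the number of j with 0 ≤ j ≤ d such that (i,j) is positive equals |i - t|. -/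
open scoped Classical

/-- The pair `(i,j)` is positive relative to `(d,s,t)`. -/
def Positive (d s t i j : ℤ) : Prop :=
  (s < t ∧ ((0 ≤ i ∧ i < s ∧ i ≤ j ∧ j < t)
          ∨ (s ≤ i ∧ i < t ∧ s ≤ j ∧ j < s + t - i)
          ∨ (t < j ∧ j ≤ i ∧ i ≤ d)))
  ∨ (s = t ∧ ((0 ≤ i ∧ i ≤ j ∧ j < s) ∨ (s < j ∧ j ≤ i ∧ i ≤ d)))
  ∨ (s > t ∧ ((0 ≤ i ∧ i ≤ j ∧ j < t)
            ∨ (t < i ∧ i ≤ s ∧ s + t - i < j ∧ j ≤ s)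
            ∨ (s < i ∧ i ≤ d ∧ t < j ∧ j ≤ i)))

open Finset

lemma exists_filter_positive_eq_Ico {d s t i : ℤ} (hs0 : 0 ≤ s) (hsd : s ≤ d) (ht0 : 0 ≤ t)
    (htd : t ≤ d) (hi0 : 0 ≤ i) (hid : i ≤ d) :
    ∃ a b, (Icc 0 d).filter (Positive d s t i) = Ico a b ∧ b - a = |i - t| := by
  rw [abs_eq_max_neg]
  suffices ∃ a b, (∀ j, (0 ≤ j ∧ j ≤ d) ∧ Positive d s t i j ↔ a ≤ j ∧ j < b) ∧
      b - a = max (i - t) (-(i - t)) by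
    obtain ⟨a, b, hmem, hlen⟩ := this
    exact ⟨a, b, by ext j; simpa using hmem j, hlen⟩
  unfold Positive
  rcases lt_trichotomy s t with hst | rfl | hst
  · rcases lt_or_ge i s with his | his
    · exact ⟨i, t, fun j => by omega, by omega⟩
    rcases lt_or_ge i t with hit | hit
    · exact ⟨s, s + t - i, fun j => by omega, by omega⟩
    · exact ⟨t + 1, i + 1, fun j => by omega, by omega⟩
  · rcases lt_or_ge i s with his | his
    · exact ⟨i, s, fun j => by omega, by omega⟩
    · exact ⟨s + 1, i + 1, fun j => by omega, by omega⟩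
  · rcases le_or_gt i t with hit | hit
    · exact ⟨i, t, fun j => by omega, by omega⟩
    rcases le_or_gt i s with his | his
    · exact ⟨s + t - i + 1, s + 1, fun j => by omega, by omega⟩
    · exact ⟨t + 1, i + 1, fun j => by omega, by omega⟩

theorem stmt_2_general (d s t i : ℤ) (hs0 : 0 ≤ s) (hsd : s ≤ d)
    (ht0 : 0 ≤ t) (htd : t ≤ d) (hi0 : 0 ≤ i) (hid : i ≤ d) :
    (((Finset.Icc (0:ℤ) d).filter (fun j : ℤ => Positive d s t i j)).card : ℤ)
      = |i - t| := by
  obtain ⟨a, b, hfilter, hlen⟩ := exists_filter_positive_eq_Ico hs0 hsd ht0 htd hi0 hid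
  rw [hfilter, Int.card_Ico, Int.toNat_of_nonneg (hlen ▸ abs_nonneg _), hlen]

theorem stmt_2 (d s t i : ℤ) (hd : 0 ≤ d) (hs0 : 0 ≤ s) (hsd : s ≤ d)
    (ht0 : 0 ≤ t) (htd : t ≤ d) (hi0 : 0 ≤ i) (hid : i ≤ d) :
    (((Finset.Icc (0:ℤ) d).filter (fun j : ℤ => Positive d s t i j)).card : ℤ)
      = |i - t| :=
  stmt_2_general d s t i hs0 hsd ht0 htd hi0 hid
end

section
/- Let d be a nonnegative integer and fix 0 ≤ s,t ≤ d. Call (i,j) ∈ {0,...,d}² zigzag if i is not between s,j, j is not between i,t, and at least one of i,j is not between s,t (where r is between a,b means a ≥ r > b or a ≤ r < b). Call (i,j) positive if it satisfies the conditions of Definition 'positive' (case s<t: 0≤i<s and i≤j<t, or s≤i<t and s≤j<s+t-i, or t<j≤i≤d; case s=t: 0≤i≤j<s or s<j≤i≤d; case s>t: 0≤i≤j<t, or t<i≤s and s+t-i<j≤s, or s<i≤d and t<j≤i). Call (i,j) negative if it is neither zigzag nor positive. Then for each fixed j with 0 ≤ j ≤ d, the number of i with 0 ≤ i ≤ d such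 that (i,j) is negative equals |j - s|. -/
open scoped Classical

/-- The pair `(i,j)` is negative: neither zigzag nor positive. -/
def Negative (d s t i j : ℤ) : Prop :=
  ¬ Zigzag s t i j ∧ ¬ Positive d s t i j

/-!
For fixed `j`, the negative `i` form an interval of length `|j - s|`. Which interval depends on
whether `j` lies above or below `s` and on whether `j` is between `s` and `t`:
`[s + t - j, t)` or `[s, j)` when `s ≤ j`, and `(t, s + t - j]` or `(j, s]` when `j < s`.
Within each of the four cases, being zigzag or positive is a linear condition on `i`.
-/

open Finset

theorem filter_Icc_eq_Icc_of_iff {c d a b : ℤ} {P : ℤ → Prop} [DecidablePred P]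
    (h : ∀ i, (c ≤ i ∧ i ≤ d ∧ P i) ↔ a ≤ i ∧ i ≤ b) :
    (Icc c d).filter P = Icc a b := by
  ext i
  simpa only [mem_filter, mem_Icc, and_assoc] using h i

section Negative

variable {d s t i j : ℤ}

theorem negative_iff_of_le_of_between (hs0 : 0 ≤ s) (htd : t ≤ d) (hsj : s ≤ j)
    (hj : Between s j t) :
    (0 ≤ i ∧ i ≤ d ∧ Negative d s t i j) ↔ s + t - j ≤ i ∧ i ≤ t - 1 := by
  simp only [Negative, Zigzag, Positive, Between] at hj ⊢
  omega

theorem negative_iff_of_le_of_not_between (hs0 : 0 ≤ s) (hjd : j ≤ d) (hsj : s ≤ j)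
    (hj : ¬ Between s j t) :
    (0 ≤ i ∧ i ≤ d ∧ Negative d s t i j) ↔ s ≤ i ∧ i ≤ j - 1 := by
  simp only [Negative, Zigzag, Positive, Between] at hj ⊢
  omega

theorem negative_iff_of_lt_of_between (ht0 : 0 ≤ t) (hsd : s ≤ d) (hjs : j < s)
    (hj : Between s j t) :
    (0 ≤ i ∧ i ≤ d ∧ Negative d s t i j) ↔ t + 1 ≤ i ∧ i ≤ s + t - j := by
  simp only [Negative, Zigzag, Positive, Between] at hj ⊢
  omega

theorem negative_iff_of_lt_of_not_between (hj0 : 0 ≤ j) (hsd : s ≤ d) (hjs : j < s)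
    (hj : ¬ Between s j t) :
    (0 ≤ i ∧ i ≤ d ∧ Negative d s t i j) ↔ j + 1 ≤ i ∧ i ≤ s := by
  simp only [Negative, Zigzag, Positive, Between] at hj ⊢
  omega

end Negative

theorem stmt_3_general (d s t j : ℤ) (hs0 : 0 ≤ s) (hsd : s ≤ d)
    (ht0 : 0 ≤ t) (htd : t ≤ d) (hj0 : 0 ≤ j) (hjd : j ≤ d) :
    (((Finset.Icc (0:ℤ) d).filter (fun i : ℤ => Negative d s t i j)).card : ℤ)
      = |j - s| := by
  rw [abs_eq_max_neg]
  rcases le_or_gt s j with hsj | hjs <;> by_cases hj : Between s j t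
  · rw [filter_Icc_eq_Icc_of_iff fun _ => negative_iff_of_le_of_between hs0 htd hsj hj,
      Int.card_Icc]
    omega
  · rw [filter_Icc_eq_Icc_of_iff fun _ => negative_iff_of_le_of_not_between hs0 hjd hsj hj,
      Int.card_Icc]
    omega
  · rw [filter_Icc_eq_Icc_of_iff fun _ => negative_iff_of_lt_of_between ht0 hsd hjs hj,
      Int.card_Icc]
    omega
  · rw [filter_Icc_eq_Icc_of_iff fun _ => negative_iff_of_lt_of_not_between hj0 hsd hjs hj,
      Int.card_Icc]
    omega

theorem stmt_3 (d s t j : ℤ) (hd : 0 ≤ d) (hs0 : 0 ≤ s) (hsd : s ≤ d)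
    (ht0 : 0 ≤ t) (htd : t ≤ d) (hj0 : 0 ≤ j) (hjd : j ≤ d) :
    (((Finset.Icc (0:ℤ) d).filter (fun i : ℤ => Negative d s t i j)).card : ℤ)
      = |j - s| :=
  stmt_3_general d s t j hs0 hsd ht0 htd hj0 hjd
end

section
/- Let x₁,...,xₙ (n ≥ 1) be a sequence of integers. Say r is between the ordered pair a,b if a ≥ r > b or a ≤ r < b. Then the following are equivalent: (A) for 2 ≤ i ≤ n-1, x_i is not between x_{i-1}, x_{i+1}, and for 3 ≤ i ≤ n-1, at least one of x_{i-1}, x_i is not between x_{i-2}, x_{i+1}; (B) for 2 ≤ i ≤ n-1, (x_{i-1} - x_i) and (x_i - x_{i+1}) have opposite sign (product ≤ 0), and for 2 ≤ i ≤ n-1, if |x_{i-1} - x_i| < |x_i - x_{i+1}| then 0 < |x₁ - x₂| < |x₂ - x₃| < ⋯ < |x_i - x_{i+1}|. -/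
theorem not_between_iff {a r b : ℤ} :
    ¬ Between a r b ↔ (a - r) * (r - b) ≤ 0 ∧ (a = r → r = b) := by
  rw [mul_nonpos_iff, Between]
  omega

theorem not_between_or_not_between_iff {w a r b : ℤ} (hwar : ¬ Between w a r)
    (harb : ¬ Between a r b) :
    (¬ Between w a b ∨ ¬ Between w r b) ↔ (|a - r| < |r - b| → |w - a| < |a - r|) := by
  simp only [Between, abs_eq_max_neg] at *
  omega

theorem abs_sub_pos_of_not_between_of_lt {a r b : ℤ} (h : ¬ Between a r b)
    (hlt : |a - r| < |r - b|) : 0 < |a - r| := by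
  simp only [Between, abs_eq_max_neg] at *
  omega

theorem abs_sub_lt_abs_sub_of_zigzag {n : ℕ} {x : ℕ → ℤ}
    (hA1 : ∀ i, 2 ≤ i → i ≤ n - 1 → ¬ Between (x (i - 1)) (x i) (x (i + 1)))
    (hA2 : ∀ i, 3 ≤ i → i ≤ n - 1 →
        (¬ Between (x (i - 2)) (x (i - 1)) (x (i + 1)) ∨
         ¬ Between (x (i - 2)) (x i) (x (i + 1))))
    {i : ℕ} (hin : i ≤ n - 1) (hlt : |x (i - 1) - x i| < |x i - x (i + 1)|)
    (j : ℕ) (hj : 1 ≤ j) (hji : j + 1 ≤ i) :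
    |x j - x (j + 1)| < |x (j + 1) - x (j + 2)| := by
  obtain ⟨m, rfl⟩ : ∃ m, i = m + 1 := ⟨i - 1, by omega⟩
  replace hji : j ≤ m := by omega
  induction hji using Nat.decreasingInduction with
  | self => exact hlt
  | of_succ k hk ih =>
    exact (not_between_or_not_between_iff (hA1 (k + 1) (by omega) (by omega))
      (hA1 (k + 2) (by omega) (by omega))).1 (hA2 (k + 2) (by omega) (by omega)) (ih (by omega))

theorem not_between_of_abs_sub_chain {n : ℕ} {x : ℕ → ℤ}
    (hB1 : ∀ i, 2 ≤ i → i ≤ n - 1 → (x (i - 1) - x i) * (x i - x (i + 1)) ≤ 0)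
    (hB2 : ∀ i, 2 ≤ i → i ≤ n - 1 →
        |x (i - 1) - x i| < |x i - x (i + 1)| →
        (0 < |x 1 - x 2| ∧
          ∀ j, 1 ≤ j → j + 1 ≤ i →
            |x j - x (j + 1)| < |x (j + 1) - x (j + 2)|))
    (i : ℕ) (hi : 2 ≤ i) (hin : i ≤ n - 1) :
    ¬ Between (x (i - 1)) (x i) (x (i + 1)) := by
  refine not_between_iff.2 ⟨hB1 i hi hin, fun hzero => ?_⟩
  by_contra hne
  have hlt : |x (i - 1) - x i| < |x i - x (i + 1)| := by
    rwa [hzero, sub_self, abs_zero, abs_pos, sub_ne_zero]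
  obtain ⟨hpos, hchain⟩ := hB2 i hi hin hlt
  obtain rfl | ⟨k, rfl⟩ : i = 2 ∨ ∃ k, i = k + 3 :=
    (eq_or_lt_of_le hi).imp Eq.symm fun _ => ⟨i - 3, by omega⟩
  · simp [show x 1 = x 2 from hzero] at hpos
  · exact absurd (hchain (k + 1) (by omega) (by omega))
      (by simp [show x (k + 2) = x (k + 3) from hzero])

theorem stmt_6_general (n : ℕ) (x : ℕ → ℤ) :
    ((∀ i, 2 ≤ i → i ≤ n - 1 → ¬ Between (x (i - 1)) (x i) (x (i + 1))) ∧
     (∀ i, 3 ≤ i → i ≤ n - 1 →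
        (¬ Between (x (i - 2)) (x (i - 1)) (x (i + 1)) ∨
         ¬ Between (x (i - 2)) (x i) (x (i + 1)))))
    ↔
    ((∀ i, 2 ≤ i → i ≤ n - 1 → (x (i - 1) - x i) * (x i - x (i + 1)) ≤ 0) ∧
     (∀ i, 2 ≤ i → i ≤ n - 1 →
        |x (i - 1) - x i| < |x i - x (i + 1)| →
        (0 < |x 1 - x 2| ∧
          ∀ j, 1 ≤ j → j + 1 ≤ i →
            |x j - x (j + 1)| < |x (j + 1) - x (j + 2)|))) := by
  constructor
  · rintro ⟨hA1, hA2⟩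
    refine ⟨fun i hi hin => (not_between_iff.1 (hA1 i hi hin)).1, fun i hi hin hlt => ?_⟩
    have hchain := abs_sub_lt_abs_sub_of_zigzag hA1 hA2 hin hlt
    exact ⟨abs_sub_pos_of_not_between_of_lt (hA1 2 le_rfl (by omega)) (hchain 1 le_rfl hi), hchain⟩
  · rintro ⟨hB1, hB2⟩
    have hA1 := not_between_of_abs_sub_chain hB1 hB2
    refine ⟨hA1, fun i hi hin => ?_⟩
    obtain ⟨k, rfl⟩ : ∃ k, i = k + 3 := ⟨i - 3, by omega⟩
    exact (not_between_or_not_between_iff (hA1 (k + 2) (by omega) (by omega))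
      (hA1 (k + 3) (by omega) hin)).2 fun hlt => (hB2 (k + 3) (by omega) hin hlt).2 (k + 1)
        (by omega) (by omega)

theorem stmt_6 (n : ℕ) (x : ℕ → ℤ) (hn : 1 ≤ n) :
    ((∀ i, 2 ≤ i → i ≤ n - 1 → ¬ Between (x (i - 1)) (x i) (x (i + 1))) ∧
     (∀ i, 3 ≤ i → i ≤ n - 1 →
        (¬ Between (x (i - 2)) (x (i - 1)) (x (i + 1)) ∨
         ¬ Between (x (i - 2)) (x i) (x (i + 1)))))
    ↔
    ((∀ i, 2 ≤ i → i ≤ n - 1 → (x (i - 1) - x i) * (x i - x (i + 1)) ≤ 0) ∧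
     (∀ i, 2 ≤ i → i ≤ n - 1 →
        |x (i - 1) - x i| < |x i - x (i + 1)| →
        (0 < |x 1 - x 2| ∧
          ∀ j, 1 ≤ j → j + 1 ≤ i →
            |x j - x (j + 1)| < |x (j + 1) - x (j + 2)|))) :=
  stmt_6_general n x
end

section
/- Fix an integer d ≥ 0 and an integer s with 0 ≤ s ≤ d. Consider finite sequences of integers x₁, x₂, ..., xₙ (n ≥ 1) with x₁ = s, xₙ = 0, x_i > 0 for 1 ≤ i ≤ n-1, 0 ≤ x_i ≤ d for all i, and such that the sequence is zigzag: for 2 ≤ i ≤ n-1, x_i is not between x_{i-1},x_{i+1}, and for 3 ≤ i ≤ n-1, at least one of x_{i-1},x_i is not between x_{i-2},x_{i+1} (where r is between a,b means a ≥ r > b or a ≤ r < b). Then the number of such sequences is exactly the binomial coefficient C(d,s). -/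
/-- `r` is between the ordered pair `a,b`: `a ≥ r > b` or `a ≤ r < b`. -/
def BetweenN (a r b : ℕ) : Prop := (a ≥ r ∧ r > b) ∨ (a ≤ r ∧ r < b)

/-- Index sequences (as lists, 0-indexed) of nonredundant lifting words:
nonempty, last entry `0`, all entries but the last positive, all entries `≤ d`,
and zigzag. -/
def LiftSeq (d : ℕ) (l : List ℕ) : Prop :=
  l ≠ [] ∧ l.getLast? = some 0 ∧
  (∀ i, i + 1 < l.length → 0 < l.getD i 0) ∧
  (∀ i, i < l.length → l.getD i 0 ≤ d) ∧
  (∀ i, 1 ≤ i → i + 1 < l.length →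
    ¬ BetweenN (l.getD (i - 1) 0) (l.getD i 0) (l.getD (i + 1) 0)) ∧
  (∀ i, 2 ≤ i → i + 1 < l.length →
    (¬ BetweenN (l.getD (i - 2) 0) (l.getD (i - 1) 0) (l.getD (i + 1) 0) ∨
     ¬ BetweenN (l.getD (i - 2) 0) (l.getD i 0) (l.getD (i + 1) 0)))

/-!
After its first entry, a zigzag sequence alternates between valleys and peaks, and the four-term
condition forces the valleys to decrease and the peaks to increase strictly: a peak that fails to
exceed the previous one starts an inward spiral, which can never reach the final `0`. Hence a
sequence starting at `s` is a strictly decreasing list of valleys in `[1, s)` interleaved with a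
strictly increasing list of peaks in `(s, d]`. Counting these tails recursively in the largest
allowed valley `v` and the last peak `p` gives `C(v + (d - p), v)` by Pascal's rule and the
hockey-stick identity, and the sequences starting at `s` are equinumerous with the tails for
`v = p = s`, which gives `C(d, s)`.
-/

open Finset

section

variable {d : ℕ}

theorem liftSeq_singleton_iff {a : ℕ} : LiftSeq d [a] ↔ a = 0 := by
  constructor
  · rintro ⟨-, h, -⟩
    simpa using h
  · rintro rfl
    refine ⟨by simp, by simp, ?_, ?_, ?_, ?_⟩ <;> intro i <;> simp

theorem liftSeq_cons_iff {a : ℕ} {t : List ℕ} (ht : t ≠ []) :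
    LiftSeq d (a :: t) ↔ LiftSeq d t ∧ 0 < a ∧ a ≤ d ∧
      (2 ≤ t.length → ¬ BetweenN a (t.getD 0 0) (t.getD 1 0)) ∧
      (3 ≤ t.length →
        ¬ BetweenN a (t.getD 0 0) (t.getD 2 0) ∨ ¬ BetweenN a (t.getD 1 0) (t.getD 2 0)) := by
  have hlast : (a :: t).getLast? = t.getLast? := by
    obtain ⟨b, u, rfl⟩ := List.exists_cons_of_ne_nil ht
    exact List.getLast?_cons_cons
  constructor
  · rintro ⟨-, hl, hpos, hle, hz, hz'⟩
    refine ⟨⟨ht, hlast ▸ hl, fun i hi => ?_, fun i hi => ?_, fun i h1 h2 => ?_, fun i h1 h2 => ?_⟩,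
      ?_, ?_, fun h => ?_, fun h => ?_⟩
    · simpa using hpos (i + 1) (by simpa)
    · simpa using hle (i + 1) (by simpa)
    · obtain ⟨j, rfl⟩ := Nat.exists_eq_add_of_le' h1
      simpa using hz (j + 2) (by omega) (by simpa)
    · obtain ⟨j, rfl⟩ := Nat.exists_eq_add_of_le' h1
      simpa using hz' (j + 3) (by omega) (by simpa)
    · simpa using hpos 0 (by simpa using List.length_pos_iff.mpr ht)
    · simpa using hle 0 (by simp)
    · simpa using hz 1 le_rfl (by simpa)
    · simpa using hz' 2 le_rfl (by simpa)
  · rintro ⟨⟨-, hl, hpos, hle, hz, hz'⟩, ha, had, h3, h4⟩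
    refine ⟨by simp, hlast ▸ hl, ?_, ?_, ?_, ?_⟩
    · rintro (_ | i) hi
      · simpa using ha
      · simpa using hpos i (by simpa using hi)
    · rintro (_ | i) hi
      · simpa using had
      · simpa using hle i (by simpa using hi)
    · rintro (_ | _ | i) h1 h2
      · omega
      · simpa using h3 (by simpa using h2)
      · simpa using hz (i + 1) (by omega) (by simpa using h2)
    · rintro (_ | _ | _ | i) h1 h2
      · omega
      · omega
      · simpa using h4 (by simpa using h2)
      · simpa using hz' (i + 2) (by omega) (by simpa using h2)

theorem liftSeq_pair_iff {a b : ℕ} : LiftSeq d [a, b] ↔ b = 0 ∧ 0 < a ∧ a ≤ d := by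
  rw [liftSeq_cons_iff (List.cons_ne_nil _ _), liftSeq_singleton_iff]
  simp

namespace LiftSeq

variable {a b c e : ℕ} {t : List ℕ}

theorem tail (h : LiftSeq d (a :: b :: t)) : LiftSeq d (b :: t) :=
  ((liftSeq_cons_iff (List.cons_ne_nil _ _)).1 h).1

theorem head_pos (h : LiftSeq d (a :: b :: t)) : 0 < a := by
  simpa using h.2.2.1 0 (by simp)

theorem head_le (h : LiftSeq d (a :: t)) : a ≤ d := by
  simpa using h.2.2.2.1 0 (by simp)

theorem not_betweenN (h : LiftSeq d (a :: b :: c :: t)) : ¬ BetweenN a b c := by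
  simpa using h.2.2.2.2.1 1 le_rfl (by simp)

theorem not_betweenN_or (h : LiftSeq d (a :: b :: c :: e :: t)) :
    ¬ BetweenN a b e ∨ ¬ BetweenN a c e := by
  simpa using h.2.2.2.2.2 2 le_rfl (by simp)

theorem head_ne : ∀ {a b : ℕ} {t : List ℕ}, LiftSeq d (a :: b :: t) → a ≠ b
  | a, b, [], h => by
    obtain ⟨rfl, ha, -⟩ := liftSeq_pair_iff.1 h
    omega
  | a, b, c :: t, h => by
    rintro rfl
    have hc : c = a := by
      have := h.not_betweenN
      simp only [BetweenN] at this
      omega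
    exact h.tail.head_ne hc.symm

/-- If `c ≤ a`, the four-term condition gives `b ≤ e` and `f ≤ c` for the next valley `e` and
peak `f`, so the pattern repeats two steps later and the sequence never reaches `0`. -/
theorem lt_of_lt : ∀ {a b c : ℕ} {t : List ℕ}, LiftSeq d (a :: b :: c :: t) → 0 < b → b < c → a < c
  | a, b, c, [], h, _, hbc => by
    have := liftSeq_pair_iff.1 h.tail
    omega
  | a, b, c, [e], h, hb, hbc => by
    have he := (liftSeq_pair_iff.1 h.tail.tail).1
    have := h.not_betweenN_or
    simp only [BetweenN] at this
    omega
  | a, b, c, e :: f :: t, h, hb, hbc => by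
    by_contra hca
    have hce := h.tail.tail.head_ne
    have hef := h.tail.tail.tail.head_ne
    have h₁ := h.tail.not_betweenN
    have h₂ := h.not_betweenN_or
    have h₃ := h.tail.tail.not_betweenN
    have h₄ := h.tail.not_betweenN_or
    simp only [BetweenN] at h₁ h₂ h₃ h₄
    have := lt_of_lt h.tail.tail (by omega) (by omega)
    omega

end LiftSeq

variable {x y : ℕ} {t : List ℕ}

theorem liftSeq_peak_cons_iff {a : ℕ} (ha : 0 < a) (had : a ≤ d) (hxa : x < a) :
    LiftSeq d (a :: x :: y :: t) ↔ LiftSeq d (x :: y :: t) ∧ a < y := by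
  constructor
  · intro h
    have hxy := h.tail.head_ne
    have hz := h.not_betweenN
    simp only [BetweenN] at hz
    exact ⟨h.tail, h.lt_of_lt h.tail.head_pos (by omega)⟩
  · rintro ⟨h, hay⟩
    rw [liftSeq_cons_iff (List.cons_ne_nil _ _)]
    refine ⟨h, ha, had, fun _ => ?_, fun hlen => Or.inr ?_⟩
    · simp only [BetweenN, List.getD_cons_zero, List.getD_cons_succ]
      omega
    · obtain _ | ⟨z, t⟩ := t
      · simp at hlen
      · have hz := h.not_betweenN
        simp only [BetweenN, List.getD_cons_zero, List.getD_cons_succ] at hz ⊢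
        omega

theorem liftSeq_valley_cons_iff (hx : 0 < x) (hxy : x < y) :
    LiftSeq d (x :: y :: t) ↔ LiftSeq d (y :: t) ∧ t.headI < x := by
  constructor
  · intro h
    obtain _ | ⟨z, t⟩ := t
    · have := liftSeq_pair_iff.1 h
      omega
    refine ⟨h.tail, ?_⟩
    obtain _ | ⟨e, t⟩ := t
    · simpa [(liftSeq_pair_iff.1 h.tail).1] using hx
    have hzy := h.tail.head_ne
    have hze := h.tail.tail.head_ne
    have h₁ := h.not_betweenN
    have h₂ := h.tail.not_betweenN
    have h₃ := h.not_betweenN_or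
    simp only [BetweenN] at h₁ h₂ h₃
    have hye := h.tail.lt_of_lt h.tail.tail.head_pos (by omega)
    simp only [List.headI]
    omega
  · rintro ⟨h, htx⟩
    rw [liftSeq_cons_iff (List.cons_ne_nil _ _)]
    refine ⟨h, hx, by have := h.head_le; omega, fun hlen => ?_, fun hlen => Or.inr ?_⟩
    · obtain _ | ⟨z, t⟩ := t
      · simp at hlen
      · simp only [BetweenN, List.getD_cons_zero, List.getD_cons_succ, List.headI] at htx ⊢
        omega
    · obtain _ | ⟨z, _ | ⟨e, t⟩⟩ := t
      · simp at hlen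
      · simp at hlen
      · have hz := h.not_betweenN
        simp only [BetweenN, List.getD_cons_zero, List.getD_cons_succ, List.headI] at htx hz ⊢
        omega

end

theorem sum_Ioc_choose_add_sub (v p d : ℕ) :
    ∑ y ∈ Ioc p d, (v + (d - y)).choose v = (v + (d - p)).choose (v + 1) := by
  have reflect : ∑ y ∈ Ioc p d, (v + (d - y)).choose v = ∑ i ∈ range (d - p), (i + v).choose v := by
    apply sum_nbij' (d - ·) (d - ·) <;> intro a ha <;> simp at ha ⊢ <;> grind
  rw [reflect]
  rcases Nat.eq_zero_or_eq_succ_pred (d - p) with h | h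
  · simp [h]
  · rw [h, Nat.sum_range_add_choose]
    congr 1
    omega

section Counting

variable {d : ℕ}

def consAbove (d p : ℕ) (f : ℕ → Finset (List ℕ)) : Finset (List ℕ) :=
  (Ioc p d).biUnion fun y => (f y).image (y :: ·)

theorem mem_consAbove {p : ℕ} {f : ℕ → Finset (List ℕ)} {l : List ℕ} :
    l ∈ consAbove d p f ↔ ∃ y u, p < y ∧ y ≤ d ∧ u ∈ f y ∧ l = y :: u := by
  simp only [consAbove, mem_biUnion, mem_image, mem_Ioc]
  grind

theorem card_consAbove (p : ℕ) (f : ℕ → Finset (List ℕ)) :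
    (consAbove d p f).card = ∑ y ∈ Ioc p d, (f y).card := by
  rw [consAbove, card_biUnion]
  · exact sum_congr rfl fun y _ => card_image_of_injective _ List.cons_injective
  · intro y _ z _ hyz
    simp only [Function.onFun, disjoint_left, mem_image]
    rintro _ ⟨u, -, rfl⟩ ⟨w, -, h⟩
    exact hyz (List.cons.inj h).1.symm

/-- The lists `x₁ :: y₁ :: x₂ :: y₂ :: ⋯ :: xₖ :: yₖ :: [0]` with `v ≥ x₁ > ⋯ > xₖ > 0` and
`p < y₁ < ⋯ < yₖ ≤ d`: the admissible continuations of a zigzag sequence after a peak `p`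
once all further valleys are `≤ v`. -/
def zigzagTails (d : ℕ) : ℕ → ℕ → Finset (List ℕ)
  | 0, _ => {[0]}
  | v + 1, p => zigzagTails d v p ∪ (consAbove d p (zigzagTails d v)).image ((v + 1) :: ·)

theorem headI_le_of_mem_zigzagTails {v p : ℕ} {t : List ℕ} (ht : t ∈ zigzagTails d v p) :
    t.headI ≤ v := by
  induction v with
  | zero => simp_all [zigzagTails]
  | succ v ih =>
    simp only [zigzagTails, mem_union, mem_image] at ht
    obtain ht | ⟨u, -, rfl⟩ := ht
    · exact (ih ht).trans v.le_succ
    · rfl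

theorem mem_zigzagTails {v p : ℕ} {t : List ℕ} :
    t ∈ zigzagTails d v p ↔ t = [0] ∨
      ∃ x y u, x < v ∧ p < y ∧ y ≤ d ∧ u ∈ zigzagTails d x y ∧ t = (x + 1) :: y :: u := by
  induction v with
  | zero => simp [zigzagTails]
  | succ v ih =>
    simp only [zigzagTails, mem_union, mem_image, mem_consAbove, ih]
    grind

theorem card_zigzagTails_succ (v p : ℕ) :
    (zigzagTails d (v + 1) p).card =
      (zigzagTails d v p).card + (consAbove d p (zigzagTails d v)).card := by
  rw [zigzagTails, card_union_of_disjoint, card_image_of_injective _ List.cons_injective]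
  refine disjoint_left.2 fun t ht ht' => ?_
  obtain ⟨u, -, rfl⟩ := mem_image.1 ht'
  simpa using headI_le_of_mem_zigzagTails ht

theorem card_zigzagTails (v p : ℕ) : (zigzagTails d v p).card = (v + (d - p)).choose v := by
  induction v generalizing p with
  | zero => simp [zigzagTails]
  | succ v ih =>
    rw [card_zigzagTails_succ, card_consAbove, ih]
    simp_rw [ih]
    rw [sum_Ioc_choose_add_sub, ← Nat.choose_succ_succ', add_right_comm]

theorem mem_zigzagTails_iff : ∀ {v p : ℕ} {t : List ℕ}, v < p → p ≤ d →
    (t ∈ zigzagTails d v p ↔ LiftSeq d (p :: t) ∧ t.headI ≤ v)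
  | v, p, [], hvp, _ => by
    refine iff_of_false (by rw [mem_zigzagTails]; simp) fun h => ?_
    have := liftSeq_singleton_iff.1 h.1
    omega
  | v, p, [x], hvp, hpd => by
    rw [mem_zigzagTails, liftSeq_pair_iff]
    simp only [List.cons.injEq, List.nil_eq, reduceCtorEq, and_false, and_true, exists_const,
      or_false, List.headI_cons]
    omega
  | v, p, x :: y :: u, hvp, hpd => by
    have hpeak := liftSeq_peak_cons_iff (d := d) (x := x) (y := y) (t := u) (by omega) hpd
    rw [mem_zigzagTails]
    simp only [List.cons.injEq, reduceCtorEq, and_false, false_or, List.headI]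
    constructor
    · rintro ⟨x, y, u, hxv, hy, hyd, hu, rfl, rfl, rfl⟩
      rw [mem_zigzagTails_iff (by omega) hyd] at hu
      refine ⟨(hpeak (by omega)).2 ⟨?_, hy⟩, by omega⟩
      exact (liftSeq_valley_cons_iff (by omega) (by omega)).2 ⟨hu.1, by omega⟩
    · rintro ⟨h, hxv⟩
      obtain ⟨h, hy⟩ := (hpeak (by omega)).1 h
      have hx := h.head_pos
      obtain ⟨h, hux⟩ := (liftSeq_valley_cons_iff hx (by omega)).1 h
      refine ⟨x - 1, y, u, by omega, hy, h.head_le, ?_, by omega, rfl, rfl⟩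
      exact (mem_zigzagTails_iff (by omega) h.head_le).2 ⟨h, by omega⟩

theorem liftSeq_succ_cons_iff {k : ℕ} {t : List ℕ} (hk : k < d) :
    LiftSeq d ((k + 1) :: t) ↔
      t ∈ zigzagTails d k (k + 1) ∪ consAbove d (k + 1) (zigzagTails d k) := by
  rw [mem_union, mem_zigzagTails_iff (lt_add_one k) hk, mem_consAbove]
  constructor
  · intro h
    obtain _ | ⟨y, u⟩ := t
    · simp [liftSeq_singleton_iff] at h
    rcases Nat.lt_or_gt_of_ne h.head_ne with hy | hy
    · obtain ⟨hu, hux⟩ := (liftSeq_valley_cons_iff (by omega) hy).1 h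
      refine Or.inr ⟨y, u, hy, hu.head_le, ?_, rfl⟩
      exact (mem_zigzagTails_iff (by omega) hu.head_le).2 ⟨hu, by omega⟩
    · exact Or.inl ⟨h, by simp only [List.headI]; omega⟩
  · rintro (⟨h, -⟩ | ⟨y, u, hy, hyd, hu, rfl⟩)
    · exact h
    · rw [mem_zigzagTails_iff (by omega) hyd] at hu
      exact (liftSeq_valley_cons_iff (by omega) hy).2 ⟨hu.1, by omega⟩

def liftSeqsFrom (d : ℕ) : ℕ → Finset (List ℕ)
  | 0 => {[0]}
  | k + 1 => (zigzagTails d k (k + 1) ∪ consAbove d (k + 1) (zigzagTails d k)).image ((k + 1) :: ·)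

theorem mem_liftSeqsFrom {s : ℕ} {l : List ℕ} (hsd : s ≤ d) :
    l ∈ liftSeqsFrom d s ↔ LiftSeq d l ∧ l.headI = s := by
  obtain _ | ⟨a, t⟩ := l
  · cases s <;> simp [liftSeqsFrom, LiftSeq]
  cases s with
  | zero =>
    obtain _ | ⟨b, t⟩ := t
    · simp [liftSeqsFrom, liftSeq_singleton_iff]
    · simpa [liftSeqsFrom] using fun h => (h.head_pos).ne'
  | succ k =>
    simp only [liftSeqsFrom, mem_image, List.cons.injEq, List.headI]
    constructor
    · rintro ⟨t, ht, rfl, rfl⟩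
      exact ⟨(liftSeq_succ_cons_iff hsd).2 ht, rfl⟩
    · rintro ⟨h, rfl⟩
      exact ⟨t, (liftSeq_succ_cons_iff hsd).1 h, rfl, rfl⟩

/-- For `s = k + 1` both sides are `zigzagTails d k s` plus `consAbove d s (zigzagTails d k)`,
up to consing `s`. -/
theorem card_liftSeqsFrom (s : ℕ) :
    (liftSeqsFrom d s).card = (zigzagTails d s s).card := by
  cases s with
  | zero => simp [liftSeqsFrom, zigzagTails]
  | succ k =>
    rw [liftSeqsFrom, card_image_of_injective _ List.cons_injective, card_union_of_disjoint,
      card_zigzagTails_succ]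
    refine disjoint_left.2 fun t ht ht' => ?_
    obtain ⟨y, u, hy, -, -, rfl⟩ := mem_consAbove.1 ht'
    have := headI_le_of_mem_zigzagTails ht
    simp only [List.headI] at this
    omega

end Counting

theorem stmt_7 (d s : ℕ) (hsd : s ≤ d) :
    {l : List ℕ | LiftSeq d l ∧ l.headI = s}.ncard = d.choose s := by
  have hset : {l : List ℕ | LiftSeq d l ∧ l.headI = s} = liftSeqsFrom d s := by
    ext l
    simp [mem_liftSeqsFrom hsd]
  rw [hset, Set.ncard_coe_finset, card_liftSeqsFrom, card_zigzagTails,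
    Nat.add_sub_cancel' hsd]
end

section
/- Let x₁,...,xₙ be a zigzag sequence of integers (for 2 ≤ i ≤ n-1, x_i is not between x_{i-1},x_{i+1}; for 3 ≤ i ≤ n-1, at least one of x_{i-1},x_i is not between x_{i-2},x_{i+1}), with x₁ = xₙ = 0 and x_i ≥ 0 for all i. If n = 2m+1 is odd, then x_i = 0 for every odd index i with 1 ≤ i ≤ n. -/
/-!
Suppose some odd-indexed term is nonzero and take the first one, `x (j + 2)` with `x j = 0`.
The zigzag conditions then force `0 < x (j + 2) ≤ x (j + 3) ≤ x (j + 1)`: a positive valley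
nested inside the preceding peak. The same conditions carry such a valley two steps forward,
so every later odd-indexed term stays positive, contradicting `x n = 0`.
-/

def PositiveValley (x : ℕ → ℕ) (j : ℕ) : Prop :=
  0 < x (j + 1) ∧ x (j + 1) ≤ x (j + 2) ∧ x (j + 2) ≤ x j

def IsZigzag (x : ℕ → ℕ) (n : ℕ) : Prop :=
  (∀ i, 2 ≤ i → i ≤ n - 1 → ¬ BetweenN (x (i - 1)) (x i) (x (i + 1))) ∧
  (∀ i, 3 ≤ i → i ≤ n - 1 →
    (¬ BetweenN (x (i - 2)) (x (i - 1)) (x (i + 1)) ∨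
     ¬ BetweenN (x (i - 2)) (x i) (x (i + 1))))

namespace IsZigzag

variable {x : ℕ → ℕ} {n j : ℕ}

theorem not_between (hx : IsZigzag x n) (hj : 1 ≤ j) (hjn : j + 2 ≤ n) :
    ¬ BetweenN (x j) (x (j + 1)) (x (j + 2)) :=
  hx.1 (j + 1) (by omega) (by omega)

theorem not_between_or (hx : IsZigzag x n) (hj : 1 ≤ j) (hjn : j + 3 ≤ n) :
    ¬ BetweenN (x j) (x (j + 1)) (x (j + 3)) ∨ ¬ BetweenN (x j) (x (j + 2)) (x (j + 3)) :=
  hx.2 (j + 2) (by omega) (by omega)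

theorem positiveValley_of_eq_zero (hx : IsZigzag x n) (hj : 1 ≤ j) (hjn : j + 3 ≤ n)
    (h0 : x j = 0) (h2 : x (j + 2) ≠ 0) : PositiveValley x (j + 1) := by
  have e1 := hx.not_between hj (by omega)
  have e2 := hx.not_between (j := j + 1) (by omega) hjn
  have e3 := hx.not_between_or hj hjn
  simp only [PositiveValley, BetweenN, add_assoc, Nat.reduceAdd] at *
  omega

theorem positiveValley_add_two (hx : IsZigzag x n) (hj : 1 ≤ j) (hjn : j + 4 ≤ n)
    (hv : PositiveValley x j) : PositiveValley x (j + 2) := by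
  have e1 := hx.not_between (j := j + 1) (by omega) (by omega)
  have e2 := hx.not_between (j := j + 2) (by omega) hjn
  have e3 := hx.not_between_or hj (by omega)
  have e4 := hx.not_between_or (j := j + 1) (by omega) hjn
  simp only [PositiveValley, BetweenN, add_assoc, Nat.reduceAdd] at *
  omega

theorem pos_add_three_of_positiveValley (hx : IsZigzag x n) (hj : 1 ≤ j) (hjn : j + 3 ≤ n)
    (hv : PositiveValley x j) : 0 < x (j + 3) := by
  have e1 := hx.not_between (j := j + 1) (by omega) hjn
  have e2 := hx.not_between_or hj hjn
  simp only [PositiveValley, BetweenN, add_assoc, Nat.reduceAdd] at *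
  omega

theorem pos_of_positiveValley (hx : IsZigzag x n) (hj : 1 ≤ j) (t : ℕ)
    (hjn : j + 2 * t + 3 ≤ n) (hv : PositiveValley x j) : 0 < x (j + 2 * t + 3) := by
  induction t generalizing j with
  | zero => exact hx.pos_add_three_of_positiveValley hj hjn hv
  | succ t ih =>
    have hv' := hx.positiveValley_add_two hj (by omega) hv
    simpa only [show j + 2 + 2 * t + 3 = j + 2 * (t + 1) + 3 by ring] using
      ih (by omega) (by omega) hv'

theorem eq_zero_add_two (hx : IsZigzag x n) (hj : 1 ≤ j) (t : ℕ) (ht : j + 2 * t + 2 = n)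
    (hlast : x n = 0) (h0 : x j = 0) : x (j + 2) = 0 := by
  by_contra h2
  cases t with
  | zero => exact h2 (by simpa [← ht] using hlast)
  | succ t =>
    have hv := hx.positiveValley_of_eq_zero hj (by omega) h0 h2
    have hpos := hx.pos_of_positiveValley (j := j + 1) (by omega) t (by omega) hv
    rw [show j + 1 + 2 * t + 3 = n by omega] at hpos
    omega

end IsZigzag

theorem stmt_8 (n m : ℕ) (x : ℕ → ℕ) (hn : n = 2 * m + 1)
    (hzz1 : ∀ i, 2 ≤ i → i ≤ n - 1 →
      ¬ BetweenN (x (i - 1)) (x i) (x (i + 1)))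
    (hzz2 : ∀ i, 3 ≤ i → i ≤ n - 1 →
      (¬ BetweenN (x (i - 2)) (x (i - 1)) (x (i + 1)) ∨
       ¬ BetweenN (x (i - 2)) (x i) (x (i + 1))))
    (h1 : x 1 = 0) (hlast : x n = 0) :
    ∀ i, 1 ≤ i → i ≤ n → Odd i → x i = 0 := by
  have hx : IsZigzag x n := ⟨hzz1, hzz2⟩
  rintro _ - hin ⟨k, rfl⟩
  induction k with
  | zero => exact h1
  | succ k ih =>
    exact hx.eq_zero_add_two (j := 2 * k + 1) le_add_self (m - k - 1) (by omega) hlast (ih (by omega))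
end

section
/- Let x₁,...,xₙ (n ≥ 1) be a zigzag sequence of integers (conditions: for 2 ≤ i ≤ n-1, x_i is not between x_{i-1},x_{i+1}; for 3 ≤ i ≤ n-1, at least one of x_{i-1},x_i is not between x_{i-2},x_{i+1}). If x_j = x_{j+1} for some 1 ≤ j ≤ n-1, then x_j = x_{j+1} = ⋯ = xₙ. -/
theorem not_between_self_left_iff {a b : ℤ} : ¬ Between a a b ↔ a = b := by
  unfold Between
  omega

theorem eq_of_forall_eq_succ {α : Type*} {x : ℕ → α} {j n : ℕ}
    (hsucc : ∀ k, j ≤ k → k + 1 ≤ n → x k = x (k + 1)) :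
    ∀ k, j ≤ k → k ≤ n → x k = x j := by
  intro k hk
  induction k, hk using Nat.le_induction with
  | base => intro _; rfl
  | succ k hk ih =>
    intro hkn
    rw [← hsucc k hk hkn]
    exact ih (by omega)

theorem forall_eq_succ_of_eq_of_step {α : Type*} {x : ℕ → α} {j n : ℕ}
    (hstep : ∀ k, j ≤ k → k + 2 ≤ n → x k = x (k + 1) → x (k + 1) = x (k + 2))
    (heq : x j = x (j + 1)) :
    ∀ k, j ≤ k → k + 1 ≤ n → x k = x (k + 1) := by
  intro k hk
  induction k, hk using Nat.le_induction with
  | base => intro _; exact heq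
  | succ k hk ih =>
    intro hkn
    exact hstep k hk hkn (ih (by omega))

theorem stmt_9_general (n : ℕ) (x : ℕ → ℤ)
    (hzz1 : ∀ i, 2 ≤ i → i ≤ n - 1 →
      ¬ Between (x (i - 1)) (x i) (x (i + 1)))
    (j : ℕ) (hj1 : 1 ≤ j) (heq : x j = x (j + 1)) :
    ∀ k, j ≤ k → k ≤ n → x k = x j := by
  have hstep : ∀ k, j ≤ k → k + 2 ≤ n → x k = x (k + 1) → x (k + 1) = x (k + 2) := by
    intro k hk hkn hxk
    have hnot := hzz1 (k + 1) (by omega) (by omega)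
    rw [Nat.add_sub_cancel, hxk] at hnot
    exact not_between_self_left_iff.mp hnot
  exact eq_of_forall_eq_succ (forall_eq_succ_of_eq_of_step hstep heq)

theorem stmt_9 (n : ℕ) (x : ℕ → ℤ)
    (hzz1 : ∀ i, 2 ≤ i → i ≤ n - 1 →
      ¬ Between (x (i - 1)) (x i) (x (i + 1)))
    (hzz2 : ∀ i, 3 ≤ i → i ≤ n - 1 →
      (¬ Between (x (i - 2)) (x (i - 1)) (x (i + 1)) ∨
       ¬ Between (x (i - 2)) (x i) (x (i + 1))))
    (j : ℕ) (hj1 : 1 ≤ j) (hjn : j + 1 ≤ n) (heq : x j = x (j + 1)) :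
    ∀ k, j ≤ k → k ≤ n → x k = x j :=
  stmt_9_general n x hzz1 j hj1 heq
end

section
/- Let x₁,...,xₙ be a zigzag sequence of integers (as above). If |x_{j-1} - x_j| < |x_j - x_{j+1}| for some 3 ≤ j ≤ n-1, then |x_{j-2} - x_{j-1}| < |x_{j-1} - x_j|. -/
theorem between_neg_iff {a r b : ℤ} : Between (-a) (-r) (-b) ↔ Between a r b := by
  unfold Between
  omega

theorem abs_sub_lt_of_zigzag_of_lt {a b c d : ℤ} (hbc : b < c) (hbcd : ¬ Between b c d)
    (habc : ¬ Between a b c) (habd_acd : ¬ Between a b d ∨ ¬ Between a c d)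
    (hlt : |b - c| < |c - d|) : |a - b| < |b - c| := by
  unfold Between at *
  rw [abs_of_neg (sub_neg.2 hbc)] at hlt ⊢
  have hdc : d ≤ c := by omega
  rw [abs_of_nonneg (sub_nonneg.2 hdc)] at hlt
  have hdb : d < b := by omega
  have hba : b < a := by omega
  have hac : a < c := by
    have hbad : a ≥ b ∧ b > d := ⟨hba.le, hdb⟩
    omega
  rw [abs_of_pos (sub_pos.2 hba)]
  omega

theorem abs_sub_lt_of_zigzag {a b c d : ℤ} (hbcd : ¬ Between b c d)
    (habc : ¬ Between a b c) (habd_acd : ¬ Between a b d ∨ ¬ Between a c d)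
    (hlt : |b - c| < |c - d|) : |a - b| < |b - c| := by
  rcases lt_trichotomy b c with hbc | rfl | hcb
  · exact abs_sub_lt_of_zigzag_of_lt hbc hbcd habc habd_acd hlt
  · exact absurd (by unfold Between; grind) hbcd
  · have key := abs_sub_lt_of_zigzag_of_lt (neg_lt_neg hcb)
      (mt between_neg_iff.1 hbcd) (mt between_neg_iff.1 habc)
      (habd_acd.imp (mt between_neg_iff.1) (mt between_neg_iff.1))
      (by rwa [neg_sub_neg, neg_sub_neg, abs_sub_comm c b, abs_sub_comm d c])
    rwa [neg_sub_neg, neg_sub_neg, abs_sub_comm b a, abs_sub_comm c b] at key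

theorem stmt_10 (n : ℕ) (x : ℕ → ℤ)
    (hzz1 : ∀ i, 2 ≤ i → i ≤ n - 1 →
      ¬ Between (x (i - 1)) (x i) (x (i + 1)))
    (hzz2 : ∀ i, 3 ≤ i → i ≤ n - 1 →
      (¬ Between (x (i - 2)) (x (i - 1)) (x (i + 1)) ∨
       ¬ Between (x (i - 2)) (x i) (x (i + 1))))
    (j : ℕ) (hj3 : 3 ≤ j) (hjn : j ≤ n - 1)
    (hlt : |x (j - 1) - x j| < |x j - x (j + 1)|) :
    |x (j - 2) - x (j - 1)| < |x (j - 1) - x j| := by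
  have habc := hzz1 (j - 1) (by omega) (by omega)
  rw [show j - 1 - 1 = j - 2 by omega, show j - 1 + 1 = j by omega] at habc
  exact abs_sub_lt_of_zigzag (hzz1 j (by omega) hjn) habc (hzz2 j hj3 hjn) hlt
end

section
/- Let K be a field, d ≥ 0, and let D be a (d+1)-dimensional commutative K-algebra with a basis of orthogonal idempotents e₀,...,e_d summing to 1, and let a = Σ_{i=0}^d θ_i e_i where θ₀,...,θ_d are mutually distinct elements of K. Then for any 0 ≤ n ≤ d and any (n+1)-element subset S ⊆ {0,...,d}, the set {e_i : i ∉ S} ∪ {1, a, a², ..., aⁿ} is a basis for D. -/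
/-!
Through the idempotent basis, `D` is the algebra `K^{d+1}` with pointwise operations: `e i` is the
`i`-th unit vector and `a` is `θ`, so `a ^ k` is `θ ^ k`. A linear relation among the unit vectors
off `S` and `1, θ, …, θⁿ`, read at a coordinate `j ∈ S`, says that a polynomial of degree `≤ n`
vanishes at the `n + 1` distinct points `θ j`; hence its coefficients vanish, and reading the
relation off `S` kills the remaining ones. The family has `d + 1` members, so it is a basis.
-/

open Finset

section

variable {K : Type*} [Field K]

theorem eq_zero_of_forall_mem_sum_mul_pow_eq_zero {ι : Type*} {s : Finset ι} {θ : ι → K}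
    (hθ : Set.InjOn θ s) {m : ℕ} (hm : m ≤ #s) {g : Fin m → K}
    (h : ∀ j ∈ s, ∑ k, g k * θ j ^ (k : ℕ) = 0) : g = 0 := by
  let pt : Fin m ↪ s := (Fin.castLEEmb hm).trans s.equivFin.symm.toEmbedding
  refine Matrix.eq_zero_of_forall_index_sum_mul_pow_eq_zero (f := fun k => θ (pt k))
    (fun k l hkl => pt.injective (Subtype.ext (hθ (pt k).2 (pt l).2 hkl))) fun k => h _ (pt k).2

theorem Pi.linearIndependent_sumElim_single_pow {ι : Type*} [Fintype ι] [DecidableEq ι]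
    {s : Finset ι} {θ : ι → K} (hθ : Set.InjOn θ s) {m : ℕ} (hm : m ≤ #s) :
    LinearIndependent K (Sum.elim (fun i : {i // i ∉ s} => Pi.single (i : ι) (1 : K))
      (fun k : Fin m => θ ^ (k : ℕ))) := by
  rw [Fintype.linearIndependent_iff]
  intro g hg
  have hcoord : ∀ j, ∑ i : {i // i ∉ s}, g (.inl i) * (Pi.single (i : ι) (1 : K) : ι → K) j
      + ∑ k, g (.inr k) * θ j ^ (k : ℕ) = 0 := fun j => by
    simpa [Fintype.sum_sum_type] using congrFun hg j
  have hpow : ∀ k, g (.inr k) = 0 := by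
    refine congrFun (eq_zero_of_forall_mem_sum_mul_pow_eq_zero (g := fun k => g (.inr k)) hθ hm
      fun j hj => ?_)
    simpa [Pi.single_apply, fun i : {i // i ∉ s} => ne_of_mem_of_not_mem hj i.2] using hcoord j
  rintro (i | k)
  · simpa [hpow, Pi.single_apply, Subtype.val_inj] using hcoord i
  · exact hpow k

end

namespace CompleteOrthogonalIdempotents

variable {R A ι : Type*} [CommSemiring R] [Semiring A] [Algebra R A] [Fintype ι] {e : ι → A}

def piAlgHom (he : CompleteOrthogonalIdempotents e) : (ι → R) →ₐ[R] A :=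
  AlgHom.ofLinearMap (Fintype.linearCombination R e)
    (by simp [Fintype.linearCombination_apply, he.complete])
    (fun c c' => by
      classical
      simp [Fintype.linearCombination_apply, Finset.sum_mul_sum, he.mul_eq, smul_smul,
        mul_comm])

theorem piAlgHom_apply (he : CompleteOrthogonalIdempotents e) (c : ι → R) :
    he.piAlgHom c = ∑ i, c i • e i :=
  rfl

theorem piAlgHom_single [DecidableEq ι] (he : CompleteOrthogonalIdempotents e) (i : ι) :
    he.piAlgHom (Pi.single i (1 : R)) = e i := by
  simp [piAlgHom]

end CompleteOrthogonalIdempotents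

theorem stmt_12_general (K : Type*) [Field K] (d : ℕ) (D : Type*) [CommRing D] [Algebra K D]
    (e : Fin (d + 1) → D) (b : Module.Basis (Fin (d + 1)) K D) (hb : ∀ i, b i = e i)
    (horth : ∀ i j, e i * e j = if i = j then e i else 0)
    (hsum : ∑ i, e i = 1)
    (θ : Fin (d + 1) → K) (hθ : Function.Injective θ)
    (a : D) (ha : a = ∑ i, θ i • e i)
    (n : ℕ) (S : Finset (Fin (d + 1))) (hS : S.card = n + 1) :
    LinearIndependent K
      (Sum.elim (fun i : {i : Fin (d + 1) // i ∉ S} => e i)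
                (fun k : Fin (n + 1) => a ^ (k : ℕ))) ∧
    Submodule.span K (Set.range
      (Sum.elim (fun i : {i : Fin (d + 1) // i ∉ S} => e i)
                (fun k : Fin (n + 1) => a ^ (k : ℕ)))) = ⊤ := by
  classical
  have he : CompleteOrthogonalIdempotents e := ⟨OrthogonalIdempotents.iff_mul_eq.mpr horth, hsum⟩
  have hφ : ⇑(he.piAlgHom (R := K)) = b.equivFun.symm := by
    funext c
    simp [he.piAlgHom_apply, b.equivFun_symm_apply, hb]
  have hfamily : Sum.elim (fun i : {i // i ∉ S} => e i) (fun k : Fin (n + 1) => a ^ (k : ℕ)) =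
      he.piAlgHom ∘ Sum.elim (fun i : {i // i ∉ S} => Pi.single (i : Fin (d + 1)) (1 : K))
        (fun k : Fin (n + 1) => θ ^ (k : ℕ)) := by
    ext (i | k)
    · simp [he.piAlgHom_single]
    · simp only [Function.comp_apply, Sum.elim_inr]
      rw [map_pow, he.piAlgHom_apply, ha]
  have hli : LinearIndependent K _ := hfamily ▸ hφ ▸
    (Pi.linearIndependent_sumElim_single_pow hθ.injOn hS.ge).map' _ b.equivFun.symm.ker
  have : Module.Finite K D := .of_basis b
  refine ⟨hli, hli.span_eq_top_of_card_eq_finrank' ?_⟩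
  have hSle : S.card ≤ d + 1 := by simpa using S.card_le_univ
  simp only [Fintype.card_sum, Fintype.card_subtype_compl, Fintype.card_coe, Fintype.card_fin,
    Module.finrank_eq_card_basis b]
  omega

theorem stmt_12 (K : Type*) [Field K] (d : ℕ) (D : Type*) [CommRing D] [Algebra K D]
    (e : Fin (d + 1) → D) (b : Module.Basis (Fin (d + 1)) K D) (hb : ∀ i, b i = e i)
    (horth : ∀ i j, e i * e j = if i = j then e i else 0)
    (hsum : ∑ i, e i = 1)
    (θ : Fin (d + 1) → K) (hθ : Function.Injective θ)
    (a : D) (ha : a = ∑ i, θ i • e i)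
    (n : ℕ) (hn : n ≤ d) (S : Finset (Fin (d + 1))) (hS : S.card = n + 1) :
    LinearIndependent K
      (Sum.elim (fun i : {i : Fin (d + 1) // i ∉ S} => e i)
                (fun k : Fin (n + 1) => a ^ (k : ℕ))) ∧
    Submodule.span K (Set.range
      (Sum.elim (fun i : {i : Fin (d + 1) // i ∉ S} => e i)
                (fun k : Fin (n + 1) => a ^ (k : ℕ)))) = ⊤ :=
  stmt_12_general K d D e b hb horth hsum θ hθ a ha n S hS
end

section
/- Let K be a field, d ≥ 0, let D be a commutative K-algebra with orthogonal idempotents e₀,...,e_d summing to 1 and a = Σ θ_i e_i with θ_i distinct. Fix integers 0 ≤ s,t ≤ d. Then the following two sets together form a basis for D: {a^k : 0 ≤ k ≤ d, k < |s-t|} and {e_i : 0 ≤ i ≤ d, i is not between s,t}, where r is between the ordered pair a,b means a ≥ r > b or a ≤ r < b. -/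
open Polynomial Function Set

theorem LinearIndependent.sumElim_of_comp {R M M' ι ι' : Type*} [Ring R] [AddCommGroup M]
    [AddCommGroup M'] [Module R M] [Module R M'] {v : ι → M} {w : ι' → M} {f : M →ₗ[R] M'}
    (hv : LinearIndependent R (f ∘ v)) (hw : LinearIndependent R w) (hfw : ∀ i, f (w i) = 0) :
    LinearIndependent R (Sum.elim v w) :=
  hv.of_comp.sum_type hw <| (Submodule.range_ker_disjoint hv).mono_right <|
    Submodule.span_le.2 <| range_subset_iff.2 hfw

theorem linearIndependent_pow_of_lt_card {K ι κ : Type*} [Field K] [Finite ι] {θ : ι → K}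
    (hθ : Injective θ) {n : κ → ℕ} (hn : Injective n) (hlt : ∀ k, n k < Nat.card ι) :
    LinearIndependent K (fun k x => θ x ^ n k : κ → ι → K) := by
  classical
  have := Fintype.ofFinite ι
  rw [linearIndependent_iff']
  intro s g hg k hk
  set P : K[X] := ∑ j ∈ s, g j • X ^ n j
  have hcoeff (i : ℕ) : P.coeff i = ∑ j ∈ s, if i = n j then g j else 0 := by
    simp [P, coeff_X_pow]
  have hdeg : P.degree < (Finset.univ : Finset ι).card := by
    refine (degree_lt_iff_coeff_zero _ _).2 fun i hi => ?_
    rw [hcoeff]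
    refine Finset.sum_eq_zero fun j _ => if_neg fun h => ?_
    have := hlt j
    rw [Nat.card_eq_fintype_card, ← Finset.card_univ, ← h] at this
    exact this.not_ge hi
  have hP : P = 0 := by
    refine eq_zero_of_degree_lt_of_eval_index_eq_zero Finset.univ hθ.injOn hdeg fun x _ => ?_
    simpa [P, eval_finsetSum] using congrFun hg x
  have := hcoeff (n k)
  rwa [hP, coeff_zero, Finset.sum_eq_single_of_mem k hk fun j _ hjk => if_neg (hn.ne hjk.symm),
    if_pos rfl, eq_comm] at this

theorem sum_smul_pow_of_orthogonal {ι R A : Type*} [Fintype ι] [DecidableEq ι] [CommSemiring R]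
    [Semiring A] [Algebra R A] {e : ι → A} (horth : ∀ i j, e i * e j = if i = j then e i else 0)
    (hsum : ∑ i, e i = 1) (θ : ι → R) (k : ℕ) :
    (∑ i, θ i • e i) ^ k = ∑ i, θ i ^ k • e i := by
  induction k with
  | zero => simpa using hsum.symm
  | succ k ih =>
    rw [pow_succ, ih, Finset.sum_mul_sum]
    refine Finset.sum_congr rfl fun i _ => ?_
    simp [horth, pow_succ, smul_smul, mul_comm]

theorem natCard_betweenN {n s t : ℕ} (hs : s < n) (ht : t < n) :
    Nat.card {i : Fin n // BetweenN s i t} = max s t - min s t := by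
  rcases le_total s t with hst | hts
  · have : {i : Fin n | BetweenN s i t} = Ico ⟨s, hs⟩ ⟨t, ht⟩ := by
      ext; simp [BetweenN, Fin.le_def, Fin.lt_def]; omega
    rw [← coe_ofPred, this, Nat.card_eq_fintype_card, Fintype.card_Ico, Fin.card_Ico,
      max_eq_right hst, min_eq_left hst]
  · have : {i : Fin n | BetweenN s i t} = Ioc ⟨t, ht⟩ ⟨s, hs⟩ := by
      ext; simp [BetweenN, Fin.le_def, Fin.lt_def]; omega
    rw [← coe_ofPred, this, Nat.card_eq_fintype_card, Fintype.card_Ioc, Fin.card_Ioc,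
      max_eq_left hts, min_eq_right hts]

theorem natCard_fin_val_lt {n m : ℕ} (hm : m ≤ n) : Nat.card {k : Fin n // (k : ℕ) < m} = m := by
  classical
  rw [Nat.card_eq_fintype_card, Fintype.card_subtype, Fin.card_filter_val_lt, min_eq_right hm]

theorem linearIndependent_sumElim_pow_basis {K D ι κ : Type*} [Field K] [Ring D] [Algebra K D]
    (b : Module.Basis ι K D) {θ : ι → K} (hθ : Injective θ) {a : D}
    (hcoord : ∀ x k, b.coord x (a ^ k) = θ x ^ k) (p : ι → Prop) [Finite {x // p x}]
    {n : κ → ℕ} (hn : Injective n) (hlt : ∀ k, n k < Nat.card {x // p x}) :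
    LinearIndependent K (Sum.elim (fun k => a ^ n k) (fun i : {i // ¬ p i} => b i)) := by
  let f : D →ₗ[K] ({x // p x} → K) := LinearMap.pi fun x => b.coord x
  have hfpow : (f ∘ fun k => a ^ n k) = fun k (x : {x // p x}) => θ x ^ n k := by
    ext k x
    simp [f, hcoord]
  have hfb (i : {i // ¬ p i}) : f (b i) = 0 := by
    ext x
    have hix : i.1 ≠ x.1 := fun h => i.2 (h ▸ x.2)
    simp [f, Module.Basis.coord_apply, hix]
  exact .sumElim_of_comp (hfpow ▸ linearIndependent_pow_of_lt_card (hθ.comp Subtype.val_injective)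
    hn hlt) (b.linearIndependent.comp _ Subtype.val_injective) hfb

theorem stmt_13 (K : Type*) [Field K] (d : ℕ) (D : Type*) [CommRing D] [Algebra K D]
    (e : Fin (d + 1) → D) (b : Module.Basis (Fin (d + 1)) K D) (hb : ∀ i, b i = e i)
    (horth : ∀ i j, e i * e j = if i = j then e i else 0)
    (hsum : ∑ i, e i = 1)
    (θ : Fin (d + 1) → K) (hθ : Function.Injective θ)
    (a : D) (ha : a = ∑ i, θ i • e i)
    (s t : ℕ) (hs : s ≤ d) (ht : t ≤ d) :
    LinearIndependent K
      (Sum.elim (fun k : {k : Fin (d + 1) // (k : ℕ) < max s t - min s t} => a ^ (k : ℕ))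
                (fun i : {i : Fin (d + 1) // ¬ BetweenN s (i : ℕ) t} => e i)) ∧
    Submodule.span K (Set.range
      (Sum.elim (fun k : {k : Fin (d + 1) // (k : ℕ) < max s t - min s t} => a ^ (k : ℕ))
                (fun i : {i : Fin (d + 1) // ¬ BetweenN s (i : ℕ) t} => e i))) = ⊤ := by
  classical
  obtain rfl : ⇑b = e := funext hb
  have hB := natCard_betweenN (Nat.lt_succ_of_le hs) (Nat.lt_succ_of_le ht)
  have hpow (x : Fin (d + 1)) (k : ℕ) : b.coord x (a ^ k) = θ x ^ k := by
    rw [ha, sum_smul_pow_of_orthogonal horth hsum, Module.Basis.coord_apply,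
      Module.Basis.repr_sum_self]
  have hli := linearIndependent_sumElim_pow_basis b hθ hpow (fun i : Fin (d + 1) => BetweenN s i t)
    (n := fun k : {k : Fin (d + 1) // (k : ℕ) < max s t - min s t} => (k.1 : ℕ))
    (fun k l h => Subtype.ext (Fin.ext h)) fun k => k.2.trans_eq hB.symm
  have := Module.Finite.of_basis b
  refine ⟨hli, hli.span_eq_top_of_card_eq_finrank' ?_⟩
  calc Fintype.card _ = Nat.card ({i : Fin (d + 1) // BetweenN s i t} ⊕
          {i : Fin (d + 1) // ¬ BetweenN s i t}) := by
        rw [Fintype.card_eq_nat_card, Nat.card_sum, Nat.card_sum, hB, natCard_fin_val_lt (by omega)]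
    _ = Module.finrank K D := by
        rw [Nat.card_congr (Equiv.sumCompl _), Module.finrank_eq_card_basis b,
          Nat.card_eq_fintype_card]
end

section
/- Let d ≥ 0 and fix 0 ≤ s,t ≤ d with s ≤ t (case s < t of the weight function). Define, for nonzigzag pairs (i,j) relative to (s,t) with s<t, the weight w(i,j): w = 2i if 0≤i<s and i≤j<t; w = 2(d-t+i+1) if s≤i<t and s≤j<s+t-i; w = 2(d-i+s) if t<j≤i≤d; w = 2j+1 if 0≤j<i≤s; w = 2(d-j+s)+1 if s<j≤t and s+t-j≤i<t; w = 2(d-j+s)+1 if t<j≤d and s≤i<j. Then: (i) if (i,j) is positive and (i,r) is negative, then w(i,j) > w(i,r); (ii) if (i,j) is negative and (r,j) is positive, then w(i,j) > w(r,j). -/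
/-- The pair `(i,j)` is positive relative to `(d,s,t)`, in the case `s < t`. -/
def PositiveLT (d s t i j : ℤ) : Prop :=
  (0 ≤ i ∧ i < s ∧ i ≤ j ∧ j < t)
  ∨ (s ≤ i ∧ i < t ∧ s ≤ j ∧ j < s + t - i)
  ∨ (t < j ∧ j ≤ i ∧ i ≤ d)

/-- The pair `(i,j)` is negative (case `s < t`): neither zigzag nor positive. -/
def NegativeLT (d s t i j : ℤ) : Prop :=
  ¬ Zigzag s t i j ∧ ¬ PositiveLT d s t i j

/-- The weight of a nonzigzag pair `(i,j)`, in the case `s < t`. -/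
noncomputable def weight (d s t i j : ℤ) : ℤ :=
  if 0 ≤ i ∧ i < s ∧ i ≤ j ∧ j < t then 2 * i
  else if s ≤ i ∧ i < t ∧ s ≤ j ∧ j < s + t - i then 2 * (d - t + i + 1)
  else if t < j ∧ j ≤ i ∧ i ≤ d then 2 * (d - i + s)
  else if 0 ≤ j ∧ j < i ∧ i ≤ s then 2 * j + 1
  else if s < j ∧ j ≤ t ∧ s + t - j ≤ i ∧ i < t then 2 * (d - j + s) + 1
  else if t < j ∧ j ≤ d ∧ s ≤ i ∧ i < j then 2 * (d - j + s) + 1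
  else 0

/-! On a positive pair the weight is even and depends only on the row `i`, on a
negative pair it is odd and depends only on the column `j`. Both claims thus become
comparisons between the row weight of a positive pair and the column weight of a negative pair
in the same row or column, which are linear inequalities on each of the finitely many regions. -/

section
variable {d s t i j r : ℤ}

def rowWeight (d s t i : ℤ) : ℤ :=
  if i < s then i else if i < t then d - t + i + 1 else d - i + s

def colWeight (d s j : ℤ) : ℤ :=
  if j < s then j else d - j + s

lemma NegativeLT.region (hst : s < t) (hi : 0 ≤ i) (hid : i ≤ d) (hj : 0 ≤ j) (hjd : j ≤ d)
    (h : NegativeLT d s t i j) :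
    (0 ≤ j ∧ j < i ∧ i ≤ s) ∨ (s < j ∧ j ≤ t ∧ s + t - j ≤ i ∧ i < t) ∨
      (t < j ∧ j ≤ d ∧ s ≤ i ∧ i < j) := by
  obtain ⟨hz, hp⟩ := h
  simp only [Zigzag, Between, PositiveLT, not_and, not_or, not_lt, not_le, ge_iff_le] at hz hp
  omega

lemma weight_of_positiveLT (hst : s < t) (h : PositiveLT d s t i j) :
    weight d s t i j = 2 * rowWeight d s t i := by
  unfold weight rowWeight
  rcases h with h | h | h <;> split_ifs <;> omega

lemma weight_of_negativeLT (hst : s < t) (hi : 0 ≤ i) (hid : i ≤ d) (hj : 0 ≤ j) (hjd : j ≤ d)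
    (h : NegativeLT d s t i j) : weight d s t i j = 2 * colWeight d s j + 1 := by
  have hreg := h.region hst hi hid hj hjd
  unfold weight colWeight
  split_ifs <;> omega

lemma colWeight_lt_rowWeight (hst : s < t) (htd : t ≤ d) (hi : 0 ≤ i) (hid : i ≤ d)
    (hr : 0 ≤ r) (hrd : r ≤ d)
    (hpos : PositiveLT d s t i j) (hneg : NegativeLT d s t i r) :
    colWeight d s r < rowWeight d s t i := by
  have hreg := hneg.region hst hi hid hr hrd
  unfold colWeight rowWeight
  rcases hpos with h | h | h <;> split_ifs <;> omega

lemma rowWeight_le_colWeight (hst : s < t) (hi : 0 ≤ i) (hid : i ≤ d) (hj : 0 ≤ j) (hjd : j ≤ d)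
    (hneg : NegativeLT d s t i j) (hpos : PositiveLT d s t r j) :
    rowWeight d s t r ≤ colWeight d s j := by
  have hreg := hneg.region hst hi hid hj hjd
  unfold colWeight rowWeight
  rcases hpos with h | h | h <;> split_ifs <;> omega

end

theorem stmt_15_general (d s t : ℤ) (hst : s < t) (htd : t ≤ d) :
    (∀ i j r, 0 ≤ i → i ≤ d → 0 ≤ j → j ≤ d → 0 ≤ r → r ≤ d →
      PositiveLT d s t i j → NegativeLT d s t i r →
      weight d s t i r < weight d s t i j) ∧
    (∀ i j r, 0 ≤ i → i ≤ d → 0 ≤ j → j ≤ d → 0 ≤ r → r ≤ d →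
      NegativeLT d s t i j → PositiveLT d s t r j →
      weight d s t r j < weight d s t i j) := by
  refine ⟨fun i j r hi hid _ _ hr hrd hpos hneg => ?_, fun i j r hi hid hj hjd _ _ hneg hpos => ?_⟩
  · rw [weight_of_positiveLT hst hpos, weight_of_negativeLT hst hi hid hr hrd hneg]
    linarith [colWeight_lt_rowWeight hst htd hi hid hr hrd hpos hneg]
  · rw [weight_of_positiveLT hst hpos, weight_of_negativeLT hst hi hid hj hjd hneg]
    linarith [rowWeight_le_colWeight hst hi hid hj hjd hneg hpos]

theorem stmt_15 (d s t : ℤ) (hd : 0 ≤ d) (hs0 : 0 ≤ s) (hst : s < t) (htd : t ≤ d) :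
    (∀ i j r, 0 ≤ i → i ≤ d → 0 ≤ j → j ≤ d → 0 ≤ r → r ≤ d →
      PositiveLT d s t i j → NegativeLT d s t i r →
      weight d s t i r < weight d s t i j) ∧
    (∀ i j r, 0 ≤ i → i ≤ d → 0 ≤ j → j ≤ d → 0 ≤ r → r ≤ d →
      NegativeLT d s t i j → PositiveLT d s t r j →
      weight d s t r j < weight d s t i j) :=
  stmt_15_general d s t hst htd
end

section
/- Fix an integer d ≥ 0. Let L denote the set of finite integer sequences x₁,...,xₙ (n ≥ 1) with values in {0,...,d}, satisfying: xₙ = 0; x_i > 0 for 1 ≤ i ≤ n-1; and the zigzag conditions (for 2 ≤ i ≤ n-1, x_i is not between x_{i-1},x_{i+1}; for 3 ≤ i ≤ n-1, at least one of x_{i-1},x_i is not between x_{i-2},x_{i+1}). Then there is a bijection f from L to the power set of {1,...,d} such that for every sequence (x₁,...,xₙ) ∈ L, the image under f has cardinality x₁. -/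
/-!
The zigzag conditions, propagated from the final `0`, say exactly that every entry `x_i` with
`i ≤ n - 2` lies strictly between `x_{i+1}` and `x_{i+2}`: read backwards, the sequence winds
inwards (`Spiral`). Walking from `x_{n-1}` down to `x₁`, start with `∅` and, on each step from
`x_{i+1}` to `x_i`, add `(x_{i+1}, x_i]` when going up and remove `[x_i, x_{i+1})` when going down
(`spiralSet`). The spiral shape makes every added interval disjoint from the current set and every
removed interval contained in it, so the set always has as many elements as the current entry.
Conversely, the set `S` and `x₁ = #S` determine `x₂`: it is the largest non-member below `x₁` if
`x₁ ∈ S`, the least member above `x₁` otherwise. This gives injectivity, and surjectivity by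
running the same step backwards.
-/

open Finset

theorem liftSeq_singleton {d a : ℕ} : LiftSeq d [a] ↔ a = 0 := by
  simp +contextual [LiftSeq]

theorem liftSeq_pair {d a b : ℕ} : LiftSeq d [a, b] ↔ 0 < a ∧ a ≤ d ∧ b = 0 := by
  constructor
  · rintro ⟨-, hlast, hpos, hle, -⟩
    exact ⟨hpos 0 (by simp), hle 0 (by simp), by simpa using hlast⟩
  · rintro ⟨ha, had, rfl⟩
    refine ⟨by simp, by simp, ?_, ?_, ?_, ?_⟩
    all_goals intro i; rcases i with _ | _ | i <;> simp_all

theorem liftSeq_cons_cons_cons {d a b c : ℕ} {r : List ℕ} :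
    LiftSeq d (a :: b :: c :: r) ↔
      0 < a ∧ a ≤ d ∧ ¬ BetweenN a b c ∧
      (∀ e ∈ r.head?, ¬ BetweenN a b e ∨ ¬ BetweenN a c e) ∧ LiftSeq d (b :: c :: r) := by
  constructor
  · rintro ⟨-, hlast, hpos, hle, hzig, hzag⟩
    refine ⟨hpos 0 (by simp), hle 0 (by simp), hzig 1 le_rfl (by simp), ?_, by simp, ?_,
      fun i hi => hpos (i + 1) (by simpa using hi), fun i hi => hle (i + 1) (by simpa using hi),
      ?_, ?_⟩
    · intro e he
      cases r with
      | nil => simp at he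
      | cons e' r => simpa [← Option.some_inj.mp he] using hzag 2 le_rfl (by simp)
    · simpa using hlast
    · intro i hi hlen
      obtain ⟨k, rfl⟩ : ∃ k, i = k + 1 := ⟨i - 1, by omega⟩
      simpa using hzig (k + 2) (by omega) (by simpa using hlen)
    · intro i hi hlen
      obtain ⟨k, rfl⟩ : ∃ k, i = k + 2 := ⟨i - 2, by omega⟩
      simpa using hzag (k + 3) (by omega) (by simpa using hlen)
  · rintro ⟨ha, had, hzig₀, hzag₀, -, hlast, hpos, hle, hzig, hzag⟩
    refine ⟨by simp, by simpa using hlast, ?_, ?_, ?_, ?_⟩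
    · rintro (_ | i) hi
      · exact ha
      · simpa using hpos i (by simpa using hi)
    · rintro (_ | i) hi
      · exact had
      · simpa using hle i (by simpa using hi)
    · rintro (_ | _ | i) hi hlen
      · omega
      · exact hzig₀
      · simpa using hzig (i + 1) (by omega) (by simpa using hlen)
    · rintro (_ | _ | _ | i) hi hlen
      · omega
      · omega
      · cases r with
        | nil => simp at hlen
        | cons e r => simpa using hzag₀ e rfl
      · simpa using hzag (i + 2) (by omega) (by simp only [List.length_cons] at hlen ⊢; omega)

inductive Spiral : List ℕ → Prop
  | zero : Spiral [0]
  | pair {a : ℕ} : 0 < a → Spiral [a, 0]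
  | cons {a b c : ℕ} {r : List ℕ} :
      min b c < a → a < max b c → Spiral (b :: c :: r) → Spiral (a :: b :: c :: r)

theorem Spiral.liftSeq_step_iff {a b c : ℕ} {r : List ℕ} (h : Spiral (b :: c :: r)) :
    (0 < a ∧ ¬ BetweenN a b c ∧ ∀ e ∈ r.head?, ¬ BetweenN a b e ∨ ¬ BetweenN a c e) ↔
      min b c < a ∧ a < max b c := by
  cases h with
  | pair hb =>
    simp only [BetweenN, List.head?_nil, Option.mem_def, reduceCtorEq, false_imp_iff,
      imp_true_iff, and_true]
    omega
  | cons hlo hhi _ => simp only [BetweenN, List.head?_cons, Option.mem_some_iff, forall_eq']; omega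

theorem liftSeq_iff_spiral {d : ℕ} : ∀ {l : List ℕ}, LiftSeq d l ↔ Spiral l ∧ ∀ x ∈ l, x ≤ d
  | [] => by simp only [LiftSeq]; exact iff_of_false (by simp) (by rintro ⟨⟨⟩, -⟩)
  | [a] => by
    rw [liftSeq_singleton]
    constructor
    · rintro rfl; exact ⟨.zero, by simp⟩
    · rintro ⟨⟨⟩, -⟩; rfl
  | [a, b] => by
    rw [liftSeq_pair]
    constructor
    · rintro ⟨ha, had, rfl⟩; exact ⟨.pair ha, by simpa using had⟩
    · rintro ⟨h, hd⟩
      cases h with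
      | pair ha => exact ⟨ha, hd a (by simp), rfl⟩
  | a :: b :: c :: r => by
    rw [liftSeq_cons_cons_cons, liftSeq_iff_spiral]
    constructor
    · rintro ⟨ha, had, hzig, hzag, hs, hd⟩
      obtain ⟨hlo, hhi⟩ := hs.liftSeq_step_iff.mp ⟨ha, hzig, hzag⟩
      exact ⟨.cons hlo hhi hs, by simp_all⟩
    · rintro ⟨hs, hd⟩
      cases hs with
      | cons hlo hhi hs =>
        obtain ⟨ha, hzig, hzag⟩ := hs.liftSeq_step_iff.mpr ⟨hlo, hhi⟩
        exact ⟨ha, hd a (by simp), hzig, hzag, hs, fun x hx => hd x (by simp_all)⟩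

namespace Spiral

variable {a b : ℕ} {r : List ℕ}

theorem tail (h : Spiral (a :: b :: r)) : Spiral (b :: r) := by
  cases h with
  | pair => exact .zero
  | cons _ _ h => exact h

theorem lt_or_gt (h : Spiral (a :: b :: r)) : b < a ∨ a < b := by
  cases h <;> omega

theorem pos (h : Spiral (a :: b :: r)) : 0 < a := by
  cases h with
  | pair => assumption
  | cons => omega

theorem eq_zero (h : Spiral [a]) : a = 0 := by
  cases h; rfl

end Spiral

/-- Unfolded, `spiralSet (x₁ :: … :: xₙ)` is `X⁺ ∪ ({1, …, x₁} \ X⁻)`, where `X⁺` and `X⁻` are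
the entries above, resp. below, their successor. -/
def spiralSet : List ℕ → Finset ℕ
  | a :: b :: r => if b < a then spiralSet (b :: r) ∪ Ioc b a else spiralSet (b :: r) \ Ico a b
  | _ => ∅

theorem spiralSet_subset_Icc {d : ℕ} : ∀ {l : List ℕ}, (∀ x ∈ l, x ≤ d) → spiralSet l ⊆ Icc 1 d
  | a :: b :: r, hd => by
    have ih : spiralSet (b :: r) ⊆ Icc 1 d := spiralSet_subset_Icc (by simp_all)
    rw [spiralSet]
    split_ifs
    · refine union_subset ih fun x hx => ?_
      have := hd a (by simp)
      simp only [mem_Ioc, mem_Icc] at hx ⊢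
      omega
    · exact sdiff_subset.trans ih
  | [_], _ | [], _ => by simp [spiralSet]

namespace Spiral

variable {a b : ℕ} {r : List ℕ}

theorem head_mem_spiralSet_iff (h : Spiral (a :: b :: r)) :
    a ∈ spiralSet (a :: b :: r) ↔ b < a := by
  rw [spiralSet]
  split_ifs with hba
  · simp [hba]
  · have := h.lt_or_gt
    simp only [mem_sdiff, mem_Ico, le_refl, true_and, hba, iff_false, not_and, not_not]
    omega

theorem mem_spiralSet_tail_iff (h : Spiral (a :: b :: r)) : b ∈ spiralSet (b :: r) ↔ a < b := by
  cases h with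
  | pair => simp [spiralSet]
  | cons hlo hhi h => rw [h.head_mem_spiralSet_iff]; omega

theorem disjoint_spiralSet_tail_Ioc (h : Spiral (a :: b :: r)) (hba : b < a) :
    Disjoint (spiralSet (b :: r)) (Ioc b a) := by
  cases h with
  | pair => simp [spiralSet]
  | cons hlo hhi h =>
    rw [spiralSet, if_neg (by omega)]
    refine disjoint_sdiff_self_left.mono_right fun x hx => ?_
    simp only [mem_Ioc, mem_Ico] at hx ⊢
    omega

theorem Ico_subset_spiralSet_tail (h : Spiral (a :: b :: r)) (hab : a < b) :
    Ico a b ⊆ spiralSet (b :: r) := by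
  cases h with
  | pair => omega
  | @cons _ _ c _ hlo hhi h =>
    rw [spiralSet, if_pos (by omega)]
    refine fun x hx => mem_union_right _ ?_
    simp only [mem_Ioc, mem_Ico] at hx ⊢
    omega

theorem card_spiralSet {l : List ℕ} (h : Spiral l) : #(spiralSet l) = l.headI := by
  induction h with
  | zero => rfl
  | pair ha => simp [spiralSet, ha]
  | @cons a b c r hlo hhi h ih =>
    have h' : Spiral (a :: b :: c :: r) := .cons hlo hhi h
    rw [spiralSet]
    split_ifs with hba
    · rw [card_union_of_disjoint (h'.disjoint_spiralSet_tail_Ioc hba), ih, Nat.card_Ioc]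
      simp only [List.headI_cons]; omega
    · have hab : a < b := by omega
      rw [card_sdiff_of_subset (h'.Ico_subset_spiralSet_tail hab), ih, Nat.card_Ico]
      simp only [List.headI_cons]; omega

theorem mem_spiralSet_iff_of_lt (h : Spiral (a :: b :: r)) (hba : b < a) {x : ℕ} (hbx : b ≤ x)
    (hxa : x ≤ a) : x ∈ spiralSet (a :: b :: r) ↔ b < x := by
  have hb : b ∉ spiralSet (b :: r) := by rw [h.mem_spiralSet_tail_iff]; omega
  rw [spiralSet, if_pos hba, mem_union, mem_Ioc]
  constructor
  · rintro (hx | hx)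
    · exact lt_of_le_of_ne hbx (by rintro rfl; exact hb hx)
    · exact hx.1
  · exact fun hx => .inr ⟨hx, hxa⟩

theorem mem_spiralSet_iff_of_gt (h : Spiral (a :: b :: r)) (hab : a < b) {x : ℕ} (hax : a ≤ x)
    (hxb : x ≤ b) : x ∈ spiralSet (a :: b :: r) ↔ x = b := by
  have hb : b ∈ spiralSet (b :: r) := h.mem_spiralSet_tail_iff.mpr hab
  rw [spiralSet, if_neg (by omega), mem_sdiff, mem_Ico]
  constructor
  · rintro ⟨-, hx⟩; omega
  · rintro rfl; exact ⟨hb, by omega⟩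

theorem spiralSet_tail (h : Spiral (a :: b :: r)) :
    spiralSet (b :: r) =
      if b < a then spiralSet (a :: b :: r) \ Ioc b a else spiralSet (a :: b :: r) ∪ Ico a b := by
  conv_rhs => rw [spiralSet]
  split_ifs with hba
  · exact (union_sdiff_cancel_right (h.disjoint_spiralSet_tail_Ioc hba)).symm
  · exact (sdiff_union_of_subset (h.Ico_subset_spiralSet_tail (by have := h.lt_or_gt; omega))).symm

theorem headI_eq_of_spiralSet_eq {l₁ l₂ : List ℕ} (h₁ : Spiral l₁) (h₂ : Spiral l₂)
    (he : spiralSet l₁ = spiralSet l₂) : l₁.headI = l₂.headI := by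
  rw [← h₁.card_spiralSet, ← h₂.card_spiralSet, he]

theorem next_eq_of_spiralSet_eq {b₁ b₂ : ℕ} {r₁ r₂ : List ℕ} (h₁ : Spiral (a :: b₁ :: r₁))
    (h₂ : Spiral (a :: b₂ :: r₂)) (he : spiralSet (a :: b₁ :: r₁) = spiralSet (a :: b₂ :: r₂)) :
    b₁ = b₂ := by
  have hpeak : b₁ < a ↔ b₂ < a := by
    rw [← h₁.head_mem_spiralSet_iff, ← h₂.head_mem_spiralSet_iff, he]
  have h₁' := h₁.lt_or_gt
  have h₂' := h₂.lt_or_gt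
  by_contra hne
  wlog hlt : b₁ < b₂ generalizing b₁ b₂ r₁ r₂
  · exact this h₂ h₁ he.symm hpeak.symm h₂' h₁' (Ne.symm hne) (by omega)
  by_cases hb₁ : b₁ < a
  · have := h₁.mem_spiralSet_iff_of_lt hb₁ hlt.le (x := b₂) (by omega)
    rw [he, h₂.mem_spiralSet_iff_of_lt (hpeak.mp hb₁) le_rfl (by omega)] at this
    omega
  · have := h₂.mem_spiralSet_iff_of_gt (x := b₁) (by omega) (by omega) hlt.le
    rw [← he, h₁.mem_spiralSet_iff_of_gt (by omega) (by omega) le_rfl] at this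
    omega

theorem eq_of_spiralSet_eq :
    ∀ {l₁ l₂ : List ℕ}, Spiral l₁ → Spiral l₂ → spiralSet l₁ = spiralSet l₂ → l₁ = l₂
  | [], _, h₁, _, _ => by cases h₁
  | _, [], _, h₂, _ => by cases h₂
  | [_], [_], h₁, h₂, _ => by rw [h₁.eq_zero, h₂.eq_zero]
  | [_], _ :: _ :: _, h₁, h₂, he =>
    absurd (h₁.headI_eq_of_spiralSet_eq h₂ he) (by rw [h₁.eq_zero]; exact h₂.pos.ne)
  | _ :: _ :: _, [_], h₁, h₂, he =>
    absurd (h₁.headI_eq_of_spiralSet_eq h₂ he) (by rw [h₂.eq_zero]; exact h₁.pos.ne')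
  | a₁ :: b₁ :: r₁, a₂ :: b₂ :: r₂, h₁, h₂, he => by
    obtain rfl : a₁ = a₂ := h₁.headI_eq_of_spiralSet_eq h₂ he
    obtain rfl := next_eq_of_spiralSet_eq h₁ h₂ he
    have := eq_of_spiralSet_eq h₁.tail h₂.tail (by rw [h₁.spiralSet_tail, h₂.spiralSet_tail, he])
    simp_all

theorem exists_eq_cons {l : List ℕ} (h : Spiral l) (hb : #(spiralSet l) = b) :
    ∃ r, l = b :: r := by
  cases l with
  | nil => cases h
  | cons a r => exact ⟨r, by rw [← hb, h.card_spiralSet]; rfl⟩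

theorem cons_of_lt (h : Spiral (b :: r)) (hba : b < a) (hb : b ∉ spiralSet (b :: r))
    (hgap : ∀ x ∈ spiralSet (b :: r), b < x → a < x) : Spiral (a :: b :: r) := by
  cases h with
  | zero => exact .pair hba
  | pair hb' => simp [spiralSet, hb'] at hb
  | @cons _ c _ _ hlo hhi h =>
    have h' : Spiral (b :: c :: _) := .cons hlo hhi h
    have hbc : b < c := by rw [h'.head_mem_spiralSet_iff] at hb; omega
    have hac := hgap c ((h'.mem_spiralSet_iff_of_gt hbc hbc.le le_rfl).mpr rfl) hbc
    exact .cons (by omega) (by omega) h'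

theorem cons_of_gt (h : Spiral (b :: r)) (ha : 0 < a) (hab : a < b) (hb : b ∈ spiralSet (b :: r))
    (hgap : ∀ x, a ≤ x → x < b → x ∈ spiralSet (b :: r)) : Spiral (a :: b :: r) := by
  cases h with
  | zero => omega
  | pair hb' => exact .cons (by omega) (by omega) (.pair hb')
  | @cons _ c _ _ hlo hhi h =>
    have h' : Spiral (b :: c :: _) := .cons hlo hhi h
    have hcb : c < b := h'.head_mem_spiralSet_iff.mp hb
    have hca : c < a := by
      by_contra! hac
      have := (h'.mem_spiralSet_iff_of_lt hcb le_rfl hcb.le).mp (hgap c hac hcb)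
      omega
    exact .cons (by omega) (by omega) h'

end Spiral

theorem exists_lt_notMem_and_Ioc_subset {S : Finset ℕ} {a : ℕ} (h0 : 0 ∉ S) (ha : a ∈ S) :
    ∃ b < a, b ∉ S ∧ Ioc b a ⊆ S := by
  have hb : Nat.findGreatest (· ∉ S) a ∉ S :=
    Nat.findGreatest_spec (P := (· ∉ S)) (Nat.zero_le _) h0
  refine ⟨_, lt_of_le_of_ne (Nat.findGreatest_le _) fun heq => hb (heq.symm ▸ ha), hb,
    fun x hx => ?_⟩
  rw [mem_Ioc] at hx
  by_contra hxS
  exact Nat.findGreatest_is_greatest hx.1 hx.2 hxS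

theorem exists_gt_mem_and_disjoint_Ico {S : Finset ℕ} {a : ℕ} (ha : a ∉ S)
    (hex : ∃ x, a < x ∧ x ∈ S) : ∃ b, a < b ∧ b ∈ S ∧ Disjoint S (Ico a b) := by
  refine ⟨Nat.find hex, (Nat.find_spec hex).1, (Nat.find_spec hex).2, disjoint_left.mpr ?_⟩
  intro x hx hxI
  rw [mem_Ico] at hxI
  exact Nat.find_min hex hxI.2 ⟨lt_of_le_of_ne hxI.1 fun h => ha (h ▸ hx), hx⟩

theorem exists_gt_card_mem {S : Finset ℕ} (h0 : 0 ∉ S) (ha : #S ∉ S) (hS : S.Nonempty) :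
    ∃ x, #S < x ∧ x ∈ S := by
  by_contra! hle
  have hsub : S ⊆ Ioo 0 #S := fun x hx => mem_Ioo.mpr
    ⟨Nat.pos_of_ne_zero fun h => h0 (h ▸ hx),
      lt_of_le_of_ne (not_lt.mp fun h => hle x h hx) fun h => ha (h ▸ hx)⟩
  have := card_le_card hsub
  rw [Nat.card_Ioo] at this
  have := hS.card_pos
  omega

theorem card_sdiff_Ioc {S : Finset ℕ} {b : ℕ} (hba : b < #S) (hIoc : Ioc b #S ⊆ S) :
    #(S \ Ioc b #S) = b := by
  rw [card_sdiff_of_subset hIoc, Nat.card_Ioc]; omega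

theorem card_union_Ico {S : Finset ℕ} {b : ℕ} (hab : #S < b) (hdisj : Disjoint S (Ico #S b)) :
    #(S ∪ Ico #S b) = b := by
  rw [card_union_of_disjoint hdisj, Nat.card_Ico]; omega

/-- Termination measure for decoding `S` with head `#S`: a step from a head in `S` keeps the
elements above the head and leaves the new head outside the set; a step from a head outside `S`
loses one element above the head. -/
def spiralRank (S : Finset ℕ) : ℕ := 2 * #{x ∈ S | #S < x} + if #S ∈ S then 1 else 0

theorem spiralRank_sdiff_Ioc_lt {S : Finset ℕ} {b : ℕ} (hba : b < #S) (hb : b ∉ S)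
    (hIoc : Ioc b #S ⊆ S) : spiralRank (S \ Ioc b #S) < spiralRank S := by
  have hfilter : {x ∈ S \ Ioc b #S | b < x} = {x ∈ S | #S < x} := by
    ext x
    simp only [mem_filter, mem_sdiff, mem_Ioc]
    constructor
    · rintro ⟨⟨hx, hxI⟩, hbx⟩; exact ⟨hx, by omega⟩
    · rintro ⟨hx, hax⟩; exact ⟨⟨hx, by omega⟩, by omega⟩
  have hmem : b ∉ S \ Ioc b #S := fun h => hb (mem_sdiff.mp h).1
  rw [spiralRank, spiralRank, card_sdiff_Ioc hba hIoc, hfilter, if_neg hmem,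
    if_pos (hIoc (right_mem_Ioc.mpr hba))]
  omega

theorem spiralRank_union_Ico_lt {S : Finset ℕ} {b : ℕ} (hab : #S < b) (hb : b ∈ S)
    (hdisj : Disjoint S (Ico #S b)) (ha : #S ∉ S) :
    spiralRank (S ∪ Ico #S b) < spiralRank S := by
  have hfilter : {x ∈ S ∪ Ico #S b | b < x} = {x ∈ S | #S < x}.erase b := by
    ext x
    simp only [mem_filter, mem_union, mem_Ico, mem_erase]
    constructor
    · rintro ⟨hx | hx, hbx⟩
      · exact ⟨by omega, hx, by omega⟩
      · omega
    · rintro ⟨hxb, hx, hax⟩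
      refine ⟨.inl hx, lt_of_le_of_ne (not_lt.mp fun hxb' => ?_) (Ne.symm hxb)⟩
      exact disjoint_left.mp hdisj hx (mem_Ico.mpr ⟨hax.le, hxb'⟩)
  have hbmem : b ∈ {x ∈ S | #S < x} := mem_filter.mpr ⟨hb, hab⟩
  rw [spiralRank, spiralRank, card_union_Ico hab hdisj, hfilter, card_erase_of_mem hbmem,
    if_pos (mem_union_left _ hb), if_neg ha]
  have := card_pos.mpr ⟨b, hbmem⟩
  omega

theorem exists_spiral_spiralSet_eq {d : ℕ} (S : Finset ℕ) (hS : S ⊆ Icc 1 d) :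
    ∃ l, Spiral l ∧ (∀ x ∈ l, x ≤ d) ∧ spiralSet l = S := by
  induction hn : spiralRank S using Nat.strong_induction_on generalizing S with
  | _ n ih =>
  have h0 : 0 ∉ S := fun h => by simpa using hS h
  rcases S.eq_empty_or_nonempty with rfl | hne
  · exact ⟨[0], .zero, by simp, rfl⟩
  have had : #S ≤ d := by simpa using card_le_card hS
  by_cases ha : #S ∈ S
  · obtain ⟨b, hba, hb, hIoc⟩ := exists_lt_notMem_and_Ioc_subset h0 ha
    obtain ⟨l, hl, hd, he⟩ :=
      ih _ (hn ▸ spiralRank_sdiff_Ioc_lt hba hb hIoc) _ (sdiff_subset.trans hS) rfl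
    obtain ⟨r, rfl⟩ := hl.exists_eq_cons (he ▸ card_sdiff_Ioc hba hIoc)
    refine ⟨#S :: b :: r, hl.cons_of_lt hba ?_ ?_, by simp_all, ?_⟩
    · rw [he]; exact fun h => hb (mem_sdiff.mp h).1
    · rw [he]; intro x hx hbx; simp only [mem_sdiff, mem_Ioc] at hx; omega
    · rw [spiralSet, if_pos hba, he, sdiff_union_of_subset hIoc]
  · obtain ⟨b, hab, hb, hdisj⟩ :=
      exists_gt_mem_and_disjoint_Ico ha (exists_gt_card_mem h0 ha hne)
    have hS' : S ∪ Ico #S b ⊆ Icc 1 d := union_subset hS fun x hx => by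
      have := hne.card_pos
      have := (mem_Icc.mp (hS hb)).2
      simp only [mem_Ico, mem_Icc] at hx ⊢
      omega
    obtain ⟨l, hl, hd, he⟩ := ih _ (hn ▸ spiralRank_union_Ico_lt hab hb hdisj ha) _ hS' rfl
    obtain ⟨r, rfl⟩ := hl.exists_eq_cons (he ▸ card_union_Ico hab hdisj)
    refine ⟨#S :: b :: r, hl.cons_of_gt hne.card_pos hab ?_ ?_, by simp_all, ?_⟩
    · rw [he]; exact mem_union_left _ hb
    · rw [he]; exact fun x hax hxb => mem_union_right _ (mem_Ico.mpr ⟨hax, hxb⟩)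
    · rw [spiralSet, if_neg (by omega), he, union_sdiff_cancel_right hdisj]

theorem stmt_18 (d : ℕ) :
    ∃ f : {l : List ℕ // LiftSeq d l} → {S : Finset ℕ // S ⊆ Finset.Icc 1 d},
      Function.Bijective f ∧
      ∀ l : {l : List ℕ // LiftSeq d l}, ((f l : Finset ℕ)).card = (l : List ℕ).headI := by
  refine ⟨fun l => ⟨spiralSet l, spiralSet_subset_Icc (liftSeq_iff_spiral.mp l.2).2⟩,
    ⟨?_, ?_⟩, fun l => (liftSeq_iff_spiral.mp l.2).1.card_spiralSet⟩
  · rintro ⟨l₁, h₁⟩ ⟨l₂, h₂⟩ he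
    exact Subtype.ext <| (liftSeq_iff_spiral.mp h₁).1.eq_of_spiralSet_eq
      (liftSeq_iff_spiral.mp h₂).1 (congrArg Subtype.val he)
  · rintro ⟨S, hS⟩
    obtain ⟨l, hl, hd, rfl⟩ := exists_spiral_spiralSet_eq S hS
    exact ⟨⟨l, liftSeq_iff_spiral.mpr ⟨hl, hd⟩⟩, rfl⟩
end

section
/- Fix an integer d ≥ 0 and a nonconstant zigzag sequence x₁,...,xₙ of integers in {0,...,d} with xₙ = 0 and x_i > 0 for 1 ≤ i ≤ n-1 (a nonredundant lifting index sequence). Then, with p as in the unimodality theorem, the interleaving inequalities hold: if n is even, 0 < x_{n-2} < x_{n-4} < ⋯ < x₂ < x₁ < x₃ < ⋯ < x_{n-1}; if n is odd, 0 < x_{n-2} < x_{n-4} < ⋯ < x₃ < x₁ < x₂ < x₄ < ⋯ < x_{n-1}. -/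
theorem lt_of_not_betweenN_of_right_lt {a r b : ℕ} (h : ¬ BetweenN a r b) (hbr : b < r) :
    a < r := by
  unfold BetweenN at h
  omega

theorem lt_of_not_betweenN_of_lt_right {a r b : ℕ} (h : ¬ BetweenN a r b) (hrb : r < b) :
    r < a := by
  unfold BetweenN at h
  omega

theorem zigzag_alternates {n : ℕ} {x : ℕ → ℕ} (hlast : x n = 0)
    (hpos : ∀ i, 1 ≤ i → i ≤ n - 1 → 0 < x i)
    (hzz1 : ∀ i, 2 ≤ i → i ≤ n - 1 → ¬ BetweenN (x (i - 1)) (x i) (x (i + 1)))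
    (m : ℕ) {i : ℕ} (hi : 1 ≤ i) (him : i + m + 1 = n) :
    if Even m then x (i + 1) < x i else x i < x (i + 1) := by
  induction m generalizing i with
  | zero =>
    rw [if_pos .zero, show i + 1 = n by omega, hlast]
    exact hpos i hi (by omega)
  | succ m ih =>
    have hnext := ih (i := i + 1) (by omega) (by omega)
    have hzz : ¬ BetweenN (x i) (x (i + 1)) (x (i + 2)) := hzz1 (i + 1) (by omega) (by omega)
    simp only [Nat.even_add_one]
    split_ifs at hnext ⊢
    · exact lt_of_not_betweenN_of_right_lt hzz hnext
    · exact lt_of_not_betweenN_of_lt_right hzz hnext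

theorem zigzag_interleaves {n : ℕ} {x : ℕ → ℕ} (hlast : x n = 0)
    (hpos : ∀ i, 1 ≤ i → i ≤ n - 1 → 0 < x i)
    (hzz1 : ∀ i, 2 ≤ i → i ≤ n - 1 → ¬ BetweenN (x (i - 1)) (x i) (x (i + 1)))
    (hzz2 : ∀ i, 3 ≤ i → i ≤ n - 1 →
      (¬ BetweenN (x (i - 2)) (x (i - 1)) (x (i + 1)) ∨
       ¬ BetweenN (x (i - 2)) (x i) (x (i + 1))))
    (m : ℕ) {i : ℕ} (hi : 1 ≤ i) (him : i + m + 2 = n) :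
    if Even m then x (i + 2) < x i else x i < x (i + 2) := by
  induction m generalizing i with
  | zero =>
    rw [if_pos .zero, show i + 2 = n by omega, hlast]
    exact hpos i hi (by omega)
  | succ m ih =>
    have hnext := ih (i := i + 1) (by omega) (by omega)
    have h₀ := zigzag_alternates hlast hpos hzz1 (m + 2) hi (by omega)
    have h₁ := zigzag_alternates hlast hpos hzz1 (m + 1) (i := i + 1) (by omega) (by omega)
    have h₂ := zigzag_alternates hlast hpos hzz1 m (i := i + 2) (by omega) (by omega)
    have hzz : ¬ BetweenN (x i) (x (i + 1)) (x (i + 3)) ∨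
        ¬ BetweenN (x i) (x (i + 2)) (x (i + 3)) := hzz2 (i + 2) (by omega) (by omega)
    simp only [Nat.even_add_one, not_not, Nat.add_assoc, Nat.reduceAdd] at hnext h₀ h₁ h₂ ⊢
    unfold BetweenN at hzz
    split_ifs at hnext h₀ h₁ h₂ ⊢ <;> omega

theorem stmt_19_general (n : ℕ) (x : ℕ → ℕ)
    (hlast : x n = 0)
    (hpos : ∀ i, 1 ≤ i → i ≤ n - 1 → 0 < x i)
    (hzz1 : ∀ i, 2 ≤ i → i ≤ n - 1 →
      ¬ BetweenN (x (i - 1)) (x i) (x (i + 1)))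
    (hzz2 : ∀ i, 3 ≤ i → i ≤ n - 1 →
      (¬ BetweenN (x (i - 2)) (x (i - 1)) (x (i + 1)) ∨
       ¬ BetweenN (x (i - 2)) (x i) (x (i + 1)))) :
    (Even n →
      ((2 + 2 ≤ n → x 2 < x 1) ∧
       (∀ i, 2 ≤ i → i + 2 ≤ n - 2 → Even i → x (i + 2) < x i) ∧
       (∀ i, 1 ≤ i → i + 2 ≤ n - 1 → Odd i → x i < x (i + 2)))) ∧
    (Odd n →
      ((3 ≤ n → x 1 < x 2) ∧
       (∀ i, 1 ≤ i → i + 2 ≤ n - 2 → Odd i → x (i + 2) < x i) ∧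
       (∀ i, 2 ≤ i → i + 2 ≤ n - 1 → Even i → x i < x (i + 2)))) := by
  have alternates := zigzag_alternates hlast hpos hzz1
  have interleaves := zigzag_interleaves hlast hpos hzz1 hzz2
  have descent (i : ℕ) (hi : 1 ≤ i) (hin : i + 2 ≤ n) (hpar : (n - i) % 2 = 0) :
      x (i + 2) < x i := by
    simpa [Nat.even_iff, show (n - 2 - i) % 2 = 0 by omega] using
      interleaves (n - 2 - i) hi (by omega)
  have ascent (i : ℕ) (hi : 1 ≤ i) (hin : i + 2 ≤ n) (hpar : (n - i) % 2 = 1) :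
      x i < x (i + 2) := by
    simpa [Nat.even_iff, show (n - 2 - i) % 2 = 1 by omega] using
      interleaves (n - 2 - i) hi (by omega)
  simp only [Nat.even_iff, Nat.odd_iff]
  refine ⟨fun hn => ⟨fun h => ?_, ?_, ?_⟩, fun hn => ⟨fun h => ?_, ?_, ?_⟩⟩
  · simpa [Nat.even_iff, show (n - 2) % 2 = 0 by omega] using alternates (n - 2) le_rfl (by omega)
  · exact fun i h₁ h₂ hi => descent i (by omega) (by omega) (by omega)
  · exact fun i h₁ h₂ hi => ascent i h₁ (by omega) (by omega)
  · simpa [Nat.even_iff, show (n - 2) % 2 = 1 by omega] using alternates (n - 2) le_rfl (by omega)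
  · exact fun i h₁ h₂ hi => descent i h₁ (by omega) (by omega)
  · exact fun i h₁ h₂ hi => ascent i (by omega) (by omega) (by omega)

theorem stmt_19 (d n : ℕ) (x : ℕ → ℕ) (hn : 1 ≤ n)
    (hrange : ∀ i, 1 ≤ i → i ≤ n → x i ≤ d)
    (hlast : x n = 0)
    (hpos : ∀ i, 1 ≤ i → i ≤ n - 1 → 0 < x i)
    (hzz1 : ∀ i, 2 ≤ i → i ≤ n - 1 →
      ¬ BetweenN (x (i - 1)) (x i) (x (i + 1)))
    (hzz2 : ∀ i, 3 ≤ i → i ≤ n - 1 →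
      (¬ BetweenN (x (i - 2)) (x (i - 1)) (x (i + 1)) ∨
       ¬ BetweenN (x (i - 2)) (x i) (x (i + 1))))
    (hnonconst : ¬ (∀ i j, 1 ≤ i → i ≤ n → 1 ≤ j → j ≤ n → x i = x j)) :
    (Even n →
      ((2 + 2 ≤ n → x 2 < x 1) ∧
       (∀ i, 2 ≤ i → i + 2 ≤ n - 2 → Even i → x (i + 2) < x i) ∧
       (∀ i, 1 ≤ i → i + 2 ≤ n - 1 → Odd i → x i < x (i + 2)))) ∧
    (Odd n →
      ((3 ≤ n → x 1 < x 2) ∧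
       (∀ i, 1 ≤ i → i + 2 ≤ n - 2 → Odd i → x (i + 2) < x i) ∧
       (∀ i, 2 ≤ i → i + 2 ≤ n - 1 → Even i → x i < x (i + 2)))) :=
  stmt_19_general n x hlast hpos hzz1 hzz2
end
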